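/- arXiv:1406.1951 — 10 statements merged into one kernel-verified Lean document; each statement's English description precedes it below -/
import Mathlib

section
/- Let Δ be a matroid on ground set [n] such that [d] is a basis, with bases ordered lexicographically with respect to the natural order on [n]. If I is an independent set of Δ with I ∩ [d] = ∅, then there exists a basis B of Δ whose restriction set R(B) (the minimal subset of B not contained in any lexicographically earlier basis) equals I. -/
/-- A matroid independence system on ground set `Finset.range n`. -/
def IsMatroidOn (n : ℕ) (Indep : Finset ℕ → Prop) : Prop :=
  Indep ∅ ∧
  (∀ I, Indep I → I ⊆ Finset.range n) ∧
  (∀ I J, I ⊆ J → Indep J → Indep I) ∧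
  (∀ I J, Indep I → Indep J → I.card < J.card → ∃ v ∈ J \ I, Indep (insert v I))

/-- `B` is a basis: a maximal independent set. -/
def IsBasisOf (Indep : Finset ℕ → Prop) (B : Finset ℕ) : Prop :=
  Indep B ∧ ∀ C, Indep C → B ⊆ C → C = B

/-- Lexicographic order on finite subsets of ℕ: the smallest element where the
two sets differ belongs to the smaller set. -/
def lexLt (A B : Finset ℕ) : Prop :=
  ∃ m, m ∈ A ∧ m ∉ B ∧ ∀ k, k < m → (k ∈ A ↔ k ∈ B)

/-- Restriction set of a basis `B` in the lexicographic shelling: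
`R(B) = {x ∈ B : (B \ {x}) ∪ {y} is a basis for some y < x}`. -/
noncomputable def restrSet (Indep : Finset ℕ → Prop) (B : Finset ℕ) : Finset ℕ :=
  @Finset.filter _ (fun x => ∃ y, y < x ∧ IsBasisOf Indep (insert y (B.erase x)))
    (Classical.decPred _) B

/-- The finite set of bases of a matroid on ground set `Finset.range n`. -/
noncomputable def basesOf (Indep : Finset ℕ → Prop) (n : ℕ) : Finset (Finset ℕ) :=
  @Finset.filter _ (IsBasisOf Indep) (Classical.decPred _) (Finset.range n).powerset

/-- The number of bases. -/
noncomputable def numBases (Indep : Finset ℕ → Prop) (n : ℕ) : ℕ := (basesOf Indep n).card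

/-- The `i`-th entry of the h-vector: the number of bases whose restriction set
in the lexicographic shelling has cardinality `i`. -/
noncomputable def hVec (Indep : Finset ℕ → Prop) (n i : ℕ) : ℕ :=
  (@Finset.filter _ (fun B => (restrSet Indep B).card = i) (Classical.decPred _)
    (basesOf Indep n)).card

/-- The independence predicate of the matroid `Γ_I` on ground set `Finset.range d`:
`G` is independent iff `G ⊆ [d]` and `G ∪ I` is independent in the ambient matroid. -/
def GammaIndep (Indep : Finset ℕ → Prop) (d : ℕ) (I : Finset ℕ) : Finset ℕ → Prop :=
  fun G => G ⊆ Finset.range d ∧ Indep (G ∪ I)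

/-!
Take `B` to be the lexicographically first basis containing `I`. An element `x ∈ B \ I` cannot
lie in `R(B)`: exchanging it for a smaller `y` would give an earlier basis still containing `I`.
Conversely every `x ∈ I` satisfies `x ≥ d`, and basis exchange against `[d]` replaces `x` in `B`
by some `y < d ≤ x`, so `x ∈ R(B)`.
-/

open Finset

/-- `lexLt` is the colex order for the reversed order on `ℕ`, which Mathlib makes linear. -/
def toDualColex (A : Finset ℕ) : Colex (Finset ℕᵒᵈ) :=
  toColex (A.map OrderDual.toDual.toEmbedding)

lemma lexLt.toDualColex_lt {A B : Finset ℕ} (h : lexLt A B) : toDualColex B < toDualColex A := by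
  obtain ⟨m, hmA, hmB, hagree⟩ := h
  refine Colex.toColex_lt_toColex_iff_exists_forall_lt.2
    ⟨OrderDual.toDual m, by simpa using hmA, by simpa using hmB, fun b hbB hbA => ?_⟩
  simp only [mem_map_equiv] at hbB hbA
  by_contra! hmb
  rcases (OrderDual.toDual_le.1 hmb).lt_or_eq with hlt | heq
  · exact hbA ((hagree _ hlt).2 hbB)
  · exact hmB (heq ▸ hbB)

lemma lexLt_insert_erase {B : Finset ℕ} {x y : ℕ} (hy : y ∉ B) (hyx : y < x) :
    lexLt (insert y (B.erase x)) B := by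
  refine ⟨y, mem_insert_self _ _, hy, fun k hk => ?_⟩
  simp only [mem_insert, mem_erase]
  constructor
  · rintro (rfl | ⟨-, hkB⟩)
    · exact absurd hk (lt_irrefl _)
    · exact hkB
  · exact fun hkB => Or.inr ⟨by omega, hkB⟩

namespace IsMatroidOn

variable {n : ℕ} {Indep : Finset ℕ → Prop}

lemma card_le_of_isBasisOf (hM : IsMatroidOn n Indep) {B C : Finset ℕ}
    (hB : IsBasisOf Indep B) (hC : Indep C) : C.card ≤ B.card := by
  by_contra! h
  obtain ⟨v, hv, hvB⟩ := hM.2.2.2 B C hB.1 hC h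
  exact (mem_sdiff.1 hv).2 (hB.2 _ hvB (subset_insert _ _) ▸ mem_insert_self v B)

lemma isBasisOf_of_card_le (hM : IsMatroidOn n Indep) {B C : Finset ℕ}
    (hB : IsBasisOf Indep B) (hC : Indep C) (hcard : B.card ≤ C.card) : IsBasisOf Indep C :=
  ⟨hC, fun _ hD hCD =>
    (eq_of_subset_of_card_le hCD ((hM.card_le_of_isBasisOf hB hD).trans hcard)).symm⟩

lemma exists_isBasisOf_superset (hM : IsMatroidOn n Indep) {I : Finset ℕ} (hI : Indep I) :
    ∃ B, IsBasisOf Indep B ∧ I ⊆ B := by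
  classical
  obtain ⟨B, hBmax⟩ := ((range n).powerset.filter fun C => Indep C ∧ I ⊆ C).exists_maximal
    ⟨I, mem_filter.2 ⟨mem_powerset.2 (hM.2.1 I hI), hI, Subset.refl _⟩⟩
  simp only [mem_filter, mem_powerset] at hBmax
  obtain ⟨⟨-, hB, hIB⟩, hmax⟩ := hBmax
  exact ⟨B, ⟨hB, fun C hC hBC =>
    Subset.antisymm (hmax ⟨hM.2.1 C hC, hC, hIB.trans hBC⟩ hBC) hBC⟩, hIB⟩

lemma exists_isBasisOf_insert_erase (hM : IsMatroidOn n Indep) {B₀ B : Finset ℕ} {x : ℕ}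
    (hB₀ : IsBasisOf Indep B₀) (hB : IsBasisOf Indep B) (hx : x ∈ B) :
    ∃ y ∈ B₀, y ∉ B.erase x ∧ IsBasisOf Indep (insert y (B.erase x)) := by
  have hcard : (B.erase x).card + 1 = B₀.card := by
    rw [card_erase_add_one hx]
    exact le_antisymm (hM.card_le_of_isBasisOf hB₀ hB.1) (hM.card_le_of_isBasisOf hB hB₀.1)
  obtain ⟨y, hy, hyB⟩ :=
    hM.2.2.2 _ _ (hM.2.2.1 _ _ (erase_subset x B) hB.1) hB₀.1 (by omega)
  obtain ⟨hyB₀, hyx⟩ := mem_sdiff.1 hy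
  exact ⟨y, hyB₀, hyx,
    hM.isBasisOf_of_card_le hB₀ hyB (by rw [card_insert_of_notMem hyx]; omega)⟩

lemma exists_isBasisOf_superset_forall_not_lexLt (hM : IsMatroidOn n Indep) {I : Finset ℕ}
    (hI : Indep I) : ∃ B, IsBasisOf Indep B ∧ I ⊆ B ∧
      ∀ B', IsBasisOf Indep B' → I ⊆ B' → ¬ lexLt B' B := by
  classical
  set T := (range n).powerset.filter fun B => IsBasisOf Indep B ∧ I ⊆ B
  have hT : ∀ B, B ∈ T ↔ IsBasisOf Indep B ∧ I ⊆ B := fun B => by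
    simpa [T] using fun hB _ => hM.2.1 B hB.1
  obtain ⟨B₀, hB₀⟩ := hM.exists_isBasisOf_superset hI
  obtain ⟨B, hBT, hmax⟩ := T.exists_max_image toDualColex ⟨B₀, (hT B₀).2 hB₀⟩
  obtain ⟨hB, hIB⟩ := (hT B).1 hBT
  exact ⟨B, hB, hIB, fun B' hB' hIB' hlt =>
    (hmax B' ((hT B').2 ⟨hB', hIB'⟩)).not_gt hlt.toDualColex_lt⟩

end IsMatroidOn

section restrSet

variable {Indep : Finset ℕ → Prop} {B : Finset ℕ}

lemma mem_restrSet {x : ℕ} :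
    x ∈ restrSet Indep B ↔ x ∈ B ∧ ∃ y, y < x ∧ IsBasisOf Indep (insert y (B.erase x)) := by
  classical
  simp only [restrSet, mem_filter]

lemma restrSet_subset_of_forall_not_lexLt {I : Finset ℕ} (hB : IsBasisOf Indep B) (hIB : I ⊆ B)
    (hmin : ∀ B', IsBasisOf Indep B' → I ⊆ B' → ¬ lexLt B' B) : restrSet Indep B ⊆ I := by
  intro x hx
  obtain ⟨hxB, y, hyx, hy⟩ := mem_restrSet.1 hx
  by_contra hxI
  have hyB : y ∉ B := by
    intro hyB
    rw [insert_eq_of_mem (mem_erase.2 ⟨hyx.ne, hyB⟩)] at hy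
    exact notMem_erase x B (hy.2 B hB.1 (erase_subset x B) ▸ hxB)
  refine hmin _ hy (fun z hz => mem_insert_of_mem (mem_erase.2 ⟨?_, hIB hz⟩))
    (lexLt_insert_erase hyB hyx)
  rintro rfl
  exact hxI hz

lemma mem_restrSet_of_le {n d x : ℕ} (hM : IsMatroidOn n Indep)
    (hd : IsBasisOf Indep (range d)) (hB : IsBasisOf Indep B) (hxB : x ∈ B) (hdx : d ≤ x) :
    x ∈ restrSet Indep B := by
  obtain ⟨y, hyd, -, hy⟩ := hM.exists_isBasisOf_insert_erase hd hB hxB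
  exact mem_restrSet.2 ⟨hxB, y, (mem_range.1 hyd).trans_le hdx, hy⟩

end restrSet

/-- Every independent set disjoint from the lex-first basis `[d]` is the
restriction set of some basis in the lexicographic shelling. -/
theorem stmt_0 (n d : ℕ) (Indep : Finset ℕ → Prop)
    (hM : IsMatroidOn n Indep) (hB : IsBasisOf Indep (Finset.range d))
    (I : Finset ℕ) (hI : Indep I) (hdisj : Disjoint I (Finset.range d)) :
    ∃ B, IsBasisOf Indep B ∧ restrSet Indep B = I := by
  obtain ⟨B, hBasis, hIB, hmin⟩ := hM.exists_isBasisOf_superset_forall_not_lexLt hI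
  refine ⟨B, hBasis, Subset.antisymm (restrSet_subset_of_forall_not_lexLt hBasis hIB hmin) ?_⟩
  intro x hxI
  have hdx : d ≤ x := not_lt.1 fun hxd => disjoint_left.1 hdisj hxI (mem_range.2 hxd)
  exact mem_restrSet_of_le hM hB hBasis (hIB hxI) hdx
end

section
/- Let Δ be a matroid on ground set [n] with [d] a basis, bases ordered lexicographically, and let I be an independent set disjoint from [d]. Let Γ_I be the matroid on ground set [d] whose independent sets are those G ⊆ [d] with G ∪ I independent in Δ. Then the set U_I = {R(B, Δ) \ I : B a basis of Δ with B \ [d] = I} equals the set V_I = {R(G, Γ_I) : G a basis of Γ_I}, where the restriction sets in Γ_I are taken with respect to the lexicographic shelling of Γ_I induced by the natural order on [d]. -/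
open Finset

section Aux
variable {n d : ℕ} {Indep : Finset ℕ → Prop} {I : Finset ℕ}

lemma aux_indep_card_le (hM : IsMatroidOn n Indep) (hB : IsBasisOf Indep (Finset.range d))
    {J : Finset ℕ} (hJ : Indep J) : J.card ≤ d := by
  by_contra h
  push_neg at h
  obtain ⟨v, hv, hvi⟩ := hM.2.2.2 _ _ hB.1 hJ (by simpa using h)
  have heq := hB.2 _ hvi (subset_insert _ _)
  exact (mem_sdiff.mp hv).2 (heq ▸ mem_insert_self v _)

lemma aux_basis_of_card (hM : IsMatroidOn n Indep) (hB : IsBasisOf Indep (Finset.range d))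
    {J : Finset ℕ} (hJ : Indep J) (hc : J.card = d) : IsBasisOf Indep J := by
  refine ⟨hJ, fun C hC hJC => ?_⟩
  exact (Finset.eq_of_subset_of_card_le hJC (by rw [hc]; exact aux_indep_card_le hM hB hC)).symm

lemma aux_gamma_basis_card (hM : IsMatroidOn n Indep) (hB : IsBasisOf Indep (Finset.range d))
    {G : Finset ℕ}
    (hG : IsBasisOf (GammaIndep Indep d I) G) : (G ∪ I).card = d := by
  have hle : (G ∪ I).card ≤ d := aux_indep_card_le hM hB hG.1.2
  rcases eq_or_lt_of_le hle with h | hlt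
  · exact h
  exfalso
  obtain ⟨v, hv, hvi⟩ := hM.2.2.2 _ _ hG.1.2 hB.1 (by simpa using hlt)
  rw [mem_sdiff, mem_union] at hv
  push_neg at hv
  have hΓ : GammaIndep Indep d I (insert v G) :=
    ⟨insert_subset hv.1 hG.1.1, by rw [Finset.insert_union]; exact hvi⟩
  have heq := hG.2 _ hΓ (subset_insert _ _)
  exact hv.2.1 (heq ▸ mem_insert_self v G)

lemma aux_corr (hM : IsMatroidOn n Indep) (hB : IsBasisOf Indep (Finset.range d))
    (hdisj : Disjoint I (Finset.range d)) {B : Finset ℕ} (hBI : B \ Finset.range d = I) :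
    IsBasisOf Indep B ↔ IsBasisOf (GammaIndep Indep d I) (B \ I) := by
  have hIB : I ⊆ B := by
    intro z hz; exact (mem_sdiff.mp (hBI ▸ hz)).1
  have hBId : B \ I ⊆ Finset.range d := by
    intro z hz
    rw [mem_sdiff] at hz
    by_contra hzd
    exact hz.2 (hBI ▸ mem_sdiff.mpr ⟨hz.1, hzd⟩)
  have hUn : B \ I ∪ I = B := Finset.sdiff_union_of_subset hIB
  constructor
  · intro hBB
    refine ⟨⟨hBId, by rw [hUn]; exact hBB.1⟩, fun C hC hGC => ?_⟩
    have hdisjC : Disjoint C I := (hdisj.mono_right hC.1).symm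
    have hCI : C ∪ I = B := hBB.2 _ hC.2 (by rw [← hUn]; exact union_subset_union_left hGC)
    rw [← hCI, Finset.union_sdiff_cancel_right hdisjC]
  · intro hG
    have hc : B.card = d := by rw [← hUn]; exact aux_gamma_basis_card hM hB hG
    exact aux_basis_of_card hM hB (by rw [← hUn]; exact hG.1.2) hc

lemma aux_restr_mem (hdisj : Disjoint I (Finset.range d)) {B : Finset ℕ}
    (hBI : B \ Finset.range d = I)
    {x y : ℕ} (hx : x ∈ B) (hxI : x ∉ I) (hy : y < x) :
    (insert y (B.erase x)) \ Finset.range d = I ∧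
      (insert y (B.erase x)) \ I = insert y ((B \ I).erase x) := by
  have hxd : x ∈ Finset.range d := by
    by_contra hxd
    exact hxI (hBI ▸ mem_sdiff.mpr ⟨hx, hxd⟩)
  have hyd : y ∈ Finset.range d := mem_range.mpr (lt_trans hy (mem_range.mp hxd))
  have hyI : y ∉ I := fun h => (Finset.disjoint_left.mp hdisj h) hyd
  have hBIiff : ∀ z, (z ∈ B ∧ z ∉ Finset.range d) ↔ z ∈ I := by
    intro z
    rw [← mem_sdiff, hBI]
  constructor
  · ext z
    simp only [mem_sdiff, mem_insert, mem_erase]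
    constructor
    · rintro ⟨hz1 | ⟨hz2, hz3⟩, hz4⟩
      · exact absurd (hz1 ▸ hyd) hz4
      · exact (hBIiff z).mp ⟨hz3, hz4⟩
    · intro hz
      have := (hBIiff z).mpr hz
      exact ⟨Or.inr ⟨fun h => hxI (h ▸ hz), this.1⟩, this.2⟩
  · ext z
    simp only [mem_sdiff, mem_insert, mem_erase]
    constructor
    · rintro ⟨hz1 | ⟨hz2, hz3⟩, hz4⟩
      · exact Or.inl hz1
      · exact Or.inr ⟨hz2, hz3, hz4⟩
    · rintro (hz1 | ⟨hz2, hz3, hz4⟩)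
      · exact ⟨Or.inl hz1, hz1 ▸ hyI⟩
      · exact ⟨Or.inr ⟨hz2, hz3⟩, hz4⟩

lemma aux_restr_eq (hM : IsMatroidOn n Indep) (hB : IsBasisOf Indep (Finset.range d))
    (hdisj : Disjoint I (Finset.range d)) {B : Finset ℕ} (hBI : B \ Finset.range d = I) :
    restrSet Indep B \ I = restrSet (GammaIndep Indep d I) (B \ I) := by
  ext x
  simp only [restrSet, mem_sdiff, Finset.mem_filter]
  constructor
  · rintro ⟨⟨hx, y, hy, hyB⟩, hxI⟩
    obtain ⟨h1, h2⟩ := aux_restr_mem hdisj hBI hx hxI hy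
    refine ⟨⟨hx, hxI⟩, y, hy, ?_⟩
    rw [← h2]
    exact (aux_corr hM hB hdisj h1).mp hyB
  · rintro ⟨⟨hx, hxI⟩, y, hy, hyB⟩
    obtain ⟨h1, h2⟩ := aux_restr_mem hdisj hBI hx hxI hy
    refine ⟨⟨hx, y, hy, ?_⟩, hxI⟩
    rw [aux_corr hM hB hdisj h1, h2]
    exact hyB

end Aux

/-- `U_I = {R(B,Δ) \ I : B basis of Δ with B \ [d] = I}` equals
`V_I = {R(G,Γ_I) : G basis of Γ_I}`. -/
theorem stmt_2 (n d : ℕ) (Indep : Finset ℕ → Prop)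
    (hM : IsMatroidOn n Indep) (hB : IsBasisOf Indep (Finset.range d))
    (I : Finset ℕ) (hI : Indep I) (hdisj : Disjoint I (Finset.range d)) :
    {S : Finset ℕ | ∃ B, IsBasisOf Indep B ∧ B \ Finset.range d = I ∧
        S = restrSet Indep B \ I}
      = {S : Finset ℕ | ∃ G, IsBasisOf (GammaIndep Indep d I) G ∧
        S = restrSet (GammaIndep Indep d I) G} := by
  ext S
  simp only [Set.mem_setOf_eq]
  constructor
  · rintro ⟨B, hBB, hBI, rfl⟩
    exact ⟨B \ I, (aux_corr hM hB hdisj hBI).mp hBB, aux_restr_eq hM hB hdisj hBI⟩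
  · rintro ⟨G, hG, rfl⟩
    have hGd : G ⊆ Finset.range d := hG.1.1
    have hdisjG : Disjoint G I := (hdisj.mono_right hGd).symm
    have hBI : (G ∪ I) \ Finset.range d = I := by
      ext z
      simp only [mem_sdiff, mem_union]
      constructor
      · rintro ⟨hz1 | hz2, hz3⟩
        · exact absurd (hGd hz1) hz3
        · exact hz2
      · intro hz
        exact ⟨Or.inr hz, fun h => (Finset.disjoint_left.mp hdisj hz) h⟩
    have hGB : (G ∪ I) \ I = G := Finset.union_sdiff_cancel_right hdisjG
    have hBb : IsBasisOf Indep (G ∪ I) := (aux_corr hM hB hdisj hBI).mpr (by rw [hGB]; exact hG)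
    refine ⟨G ∪ I, hBb, hBI, ?_⟩
    rw [aux_restr_eq hM hB hdisj hBI, hGB]
end

section
/- Let Δ be a matroid on [n] with [d] a basis, and let B be a basis of Δ with I = B \ [d] and G = B ∩ [d] (so G is a basis of Γ_I). Then the restriction set of B in the lexicographic shelling of Δ satisfies R(B, Δ) = R(G, Γ_I) ∪ I, where R(G, Γ_I) is computed in the lexicographic shelling of Γ_I. -/
private lemma card_le_basis {Indep : Finset ℕ → Prop}
    (hexch : ∀ I J, Indep I → Indep J → I.card < J.card → ∃ v ∈ J \ I, Indep (insert v I))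
    {B C : Finset ℕ} (hB : IsBasisOf Indep B) (hC : Indep C) : C.card ≤ B.card := by
  by_contra h
  push_neg at h
  obtain ⟨v, hv, hvi⟩ := hexch B C hB.1 hC h
  have heq := hB.2 _ hvi (Finset.subset_insert _ _)
  rw [Finset.mem_sdiff] at hv
  exact hv.2 (heq ▸ Finset.mem_insert_self v B)

private lemma basis_of_card {Indep : Finset ℕ → Prop}
    (hexch : ∀ I J, Indep I → Indep J → I.card < J.card → ∃ v ∈ J \ I, Indep (insert v I))
    {B C : Finset ℕ} (hB : IsBasisOf Indep B) (hC : Indep C)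
    (hcard : B.card ≤ C.card) : IsBasisOf Indep C :=
  ⟨hC, fun D hD hCD => (Finset.eq_of_subset_of_card_le hCD
      ((card_le_basis hexch hB hD).trans hcard)).symm⟩

/-- For a basis `B` with `I = B \ [d]` and `G = B ∩ [d]`, one has
`R(B, Δ) = R(G, Γ_I) ∪ I`. -/
theorem stmt_3 (n d : ℕ) (Indep : Finset ℕ → Prop)
    (hM : IsMatroidOn n Indep) (hB : IsBasisOf Indep (Finset.range d))
    (B : Finset ℕ) (hBB : IsBasisOf Indep B) :
    restrSet Indep B
      = restrSet (GammaIndep Indep d (B \ Finset.range d)) (B ∩ Finset.range d)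
          ∪ (B \ Finset.range d) := by
  obtain ⟨h0, hsub, hdown, hexch⟩ := hM
  set rd := Finset.range d with hrd
  set I := B \ rd with hI
  set G := B ∩ rd with hG
  have hGI : G ∪ I = B := by
    ext z
    simp only [hG, hI, Finset.mem_union, Finset.mem_inter, Finset.mem_sdiff]
    tauto
  have hIrd : Disjoint I rd := Finset.sdiff_disjoint
  have hGrd : G ⊆ rd := Finset.inter_subset_right
  have hdisjGI : Disjoint G I := hIrd.symm.mono_left hGrd
  have hGind : GammaIndep Indep d I G := ⟨hGrd, by rw [hGI]; exact hBB.1⟩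
  have hcardB : B.card = d := by
    have h1 := card_le_basis hexch hB hBB.1
    have h2 := card_le_basis hexch hBB hB.1
    rw [Finset.card_range] at h1 h2
    omega
  -- set identity: for x ∈ rd, y ∈ rd, insert y (B.erase x) = insert y (G.erase x) ∪ I
  have hsetid : ∀ x ∈ rd, ∀ y,
      insert y (B.erase x) = insert y (G.erase x) ∪ I := by
    intro x hx y
    have hxI : x ∉ I := fun hxi => (Finset.mem_sdiff.mp hxi).2 hx
    rw [Finset.insert_union]
    congr 1
    rw [← hGI]
    ext z
    simp only [Finset.mem_erase, Finset.mem_union]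
    constructor
    · rintro ⟨hz, hzu | hzu⟩
      · exact Or.inl ⟨hz, hzu⟩
      · exact Or.inr hzu
    · rintro (⟨hz, hzu⟩ | hzu)
      · exact ⟨hz, Or.inl hzu⟩
      · exact ⟨fun h => hxI (h ▸ hzu), Or.inr hzu⟩
  ext x
  simp only [restrSet, Finset.mem_filter, Finset.mem_union]
  constructor
  · rintro ⟨hxB, y, hyx, hbasis⟩
    by_cases hxrd : x ∈ rd
    · -- x ∈ G : show x ∈ restriction set of Γ
      left
      have hxG : x ∈ G := Finset.mem_inter.mpr ⟨hxB, hxrd⟩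
      refine ⟨hxG, y, hyx, ?_⟩
      have hyd : y ∈ rd := by
        rw [Finset.mem_range] at hxrd ⊢; omega
      have hA : insert y (B.erase x) = insert y (G.erase x) ∪ I := hsetid x hxrd y
      constructor
      · constructor
        · intro z hz
          rcases Finset.mem_insert.mp hz with h | h
          · exact h ▸ hyd
          · exact hGrd (Finset.mem_of_mem_erase h)
        · rw [← hA]; exact hbasis.1
      · intro D hD hHD
        have hsub2 : insert y (B.erase x) ⊆ D ∪ I := by
          rw [hA]; exact Finset.union_subset_union_left hHD
        have heq : D ∪ I = insert y (B.erase x) := hbasis.2 _ hD.2 hsub2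
        apply Finset.Subset.antisymm _ hHD
        intro z hz
        have : z ∈ insert y (G.erase x) ∪ I := by
          rw [← hA, ← heq]; exact Finset.mem_union_left _ hz
        rcases Finset.mem_union.mp this with h | h
        · exact h
        · exact absurd (hD.1 hz) (fun hc => (Finset.mem_sdiff.mp h).2 hc)
    · right
      exact Finset.mem_sdiff.mpr ⟨hxB, hxrd⟩
  · rintro (⟨hxG, y, hyx, hΓ⟩ | hxI)
    · -- x ∈ restriction set of Γ
      have hxB : x ∈ B := (Finset.mem_inter.mp hxG).1
      have hxrd : x ∈ rd := (Finset.mem_inter.mp hxG).2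
      refine ⟨hxB, y, hyx, ?_⟩
      have hA : insert y (B.erase x) = insert y (G.erase x) ∪ I := hsetid x hxrd y
      have hyGe : y ∉ G.erase x := by
        intro hy
        have hHeq : insert y (G.erase x) = G.erase x := Finset.insert_eq_self.mpr hy
        have hGsub : insert y (G.erase x) ⊆ G := by
          rw [hHeq]; exact Finset.erase_subset _ _
        have := hΓ.2 G hGind hGsub
        have hxg : x ∈ insert y (G.erase x) := this ▸ hxG
        rw [hHeq] at hxg
        exact (Finset.mem_erase.mp hxg).1 rfl
      have hHcard : (insert y (G.erase x)).card = G.card := by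
        rw [Finset.card_insert_of_notMem hyGe, Finset.card_erase_add_one hxG]
      have hHrd : insert y (G.erase x) ⊆ rd := hΓ.1.1
      have hcardA : (insert y (B.erase x)).card = B.card := by
        rw [hA, Finset.card_union_of_disjoint (hIrd.symm.mono_left hHrd),
          hHcard, ← Finset.card_union_of_disjoint hdisjGI, hGI]
      apply basis_of_card hexch hBB
      · rw [hA]; exact hΓ.1.2
      · omega
    · -- x ∈ I : exchange with the basis [d]
      have hxB : x ∈ B := (Finset.mem_sdiff.mp hxI).1
      have hxrd : x ∉ rd := (Finset.mem_sdiff.mp hxI).2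
      have herase : Indep (B.erase x) := hdown _ _ (Finset.erase_subset _ _) hBB.1
      have hcarde : (B.erase x).card + 1 = d := by
        rw [Finset.card_erase_add_one hxB, hcardB]
      have hlt : (B.erase x).card < rd.card := by
        rw [Finset.card_range]; omega
      obtain ⟨v, hv, hvi⟩ := hexch _ _ herase hB.1 hlt
      rw [Finset.mem_sdiff] at hv
      refine ⟨hxB, v, ?_, ?_⟩
      · have := Finset.mem_range.mp hv.1
        have : ¬ x < d := fun h => hxrd (Finset.mem_range.mpr h)
        have := Finset.mem_range.mp hv.1
        omega
      · apply basis_of_card hexch hBB hvi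
        rw [Finset.card_insert_of_notMem hv.2]
        omega
end

section
/- Let Δ be a matroid on [n] with [d] a basis. Then the h-polynomial of Δ decomposes as h(Δ, x) = Σ_I x^{|I|} · h(Γ_I, x), where the sum runs over all independent sets I of Δ contained in [n] \ [d], and Γ_I is the matroid on [d] with independent sets {G ⊆ [d] : G ∪ I independent in Δ}. -/
/-- The h-polynomial `h(Δ,x) = ∑_B x^{|R(B)|}`. -/
noncomputable def hPoly (Indep : Finset ℕ → Prop) (n : ℕ) : Polynomial ℕ :=
  ∑ B ∈ basesOf Indep n, Polynomial.X ^ (restrSet Indep B).card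

section Aux

variable {n d : ℕ} {Indep : Finset ℕ → Prop}

lemma indep_card_le (hM : IsMatroidOn n Indep) (hB : IsBasisOf Indep (Finset.range d))
    {C : Finset ℕ} (hC : Indep C) : C.card ≤ d := by
  by_contra h
  push_neg at h
  obtain ⟨v, hv, hind⟩ := hM.2.2.2 (Finset.range d) C hB.1 hC (by simpa using h)
  have h2 := hB.2 _ hind (Finset.subset_insert _ _)
  rw [Finset.mem_sdiff] at hv
  exact hv.2 (h2 ▸ Finset.mem_insert_self v _)

lemma basis_iff_card (hM : IsMatroidOn n Indep) (hB : IsBasisOf Indep (Finset.range d))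
    {B : Finset ℕ} : IsBasisOf Indep B ↔ Indep B ∧ B.card = d := by
  constructor
  · rintro ⟨hI, hmax⟩
    refine ⟨hI, le_antisymm (indep_card_le hM hB hI) ?_⟩
    by_contra h
    push_neg at h
    obtain ⟨v, hv, hind⟩ := hM.2.2.2 B (Finset.range d) hI hB.1 (by simpa using h)
    rw [Finset.mem_sdiff] at hv
    have h2 := hmax _ hind (Finset.subset_insert _ _)
    exact hv.2 (h2 ▸ Finset.mem_insert_self v _)
  · rintro ⟨hI, hcard⟩
    refine ⟨hI, fun C hC hsub => ?_⟩
    exact (Finset.eq_of_subset_of_card_le hsub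
      (by rw [hcard]; exact indep_card_le hM hB hC)).symm

lemma gamma_basis_iff (hM : IsMatroidOn n Indep) (hB : IsBasisOf Indep (Finset.range d))
    {I G : Finset ℕ} (hdisj : ∀ x ∈ I, x ∉ Finset.range d) :
    IsBasisOf (GammaIndep Indep d I) G ↔
      G ⊆ Finset.range d ∧ Indep (G ∪ I) ∧ (G ∪ I).card = d := by
  constructor
  · rintro ⟨⟨hGsub, hGI⟩, hmax⟩
    refine ⟨hGsub, hGI, le_antisymm (indep_card_le hM hB hGI) ?_⟩
    by_contra h
    push_neg at h
    obtain ⟨v, hv, hind⟩ := hM.2.2.2 (G ∪ I) (Finset.range d) hGI hB.1 (by simpa using h)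
    rw [Finset.mem_sdiff, Finset.mem_union] at hv
    push_neg at hv
    have hins : GammaIndep Indep d I (insert v G) := by
      refine ⟨Finset.insert_subset hv.1 hGsub, ?_⟩
      rw [Finset.insert_union]
      exact hind
    have h2 := hmax _ hins (Finset.subset_insert _ _)
    exact hv.2.1 (h2 ▸ Finset.mem_insert_self v _)
  · rintro ⟨hGsub, hGI, hcard⟩
    refine ⟨⟨hGsub, hGI⟩, fun C hC hsub => ?_⟩
    have hCI : C ∪ I ⊆ G ∪ I := by
      have := Finset.eq_of_subset_of_card_le (Finset.union_subset_union_left hsub (t := I))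
        (by rw [hcard]; exact indep_card_le hM hB hC.2)
      rw [this]
    refine Finset.Subset.antisymm (fun a ha => ?_) hsub
    have : a ∈ G ∪ I := hCI (Finset.mem_union_left _ ha)
    rw [Finset.mem_union] at this
    rcases this with h | h
    · exact h
    · exact absurd (hC.1 ha) (hdisj a h)

lemma restr_card (hM : IsMatroidOn n Indep) (hB : IsBasisOf Indep (Finset.range d))
    {B : Finset ℕ} (hBb : IsBasisOf Indep B) :
    (restrSet Indep B).card
      = (B \ Finset.range d).card
        + (restrSet (GammaIndep Indep d (B \ Finset.range d)) (B ∩ Finset.range d)).card := by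
  classical
  set I := B \ Finset.range d with hI
  set G := B ∩ Finset.range d with hG
  have hdisj : ∀ x ∈ I, x ∉ Finset.range d := fun x hx => (Finset.mem_sdiff.1 hx).2
  have hGsub : G ⊆ Finset.range d := Finset.inter_subset_right
  have hGB : G ⊆ B := Finset.inter_subset_left
  have hBcard : B.card = d := ((basis_iff_card hM hB).1 hBb).2
  have hset : restrSet Indep B = I ∪ restrSet (GammaIndep Indep d I) G := by
    ext x
    simp only [restrSet, Finset.mem_filter, Finset.mem_union]
    by_cases hxB : x ∈ B
    · by_cases hxd : x ∈ Finset.range d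
      · -- x ∈ G; show iff of the two existential conditions
        have hxG : x ∈ G := Finset.mem_inter.2 ⟨hxB, hxd⟩
        have hxI : x ∉ I := fun h => hdisj x h hxd
        have hxlt : x < d := Finset.mem_range.1 hxd
        have key : ∀ y, y < x →
            (IsBasisOf Indep (insert y (B.erase x)) ↔
              IsBasisOf (GammaIndep Indep d I) (insert y (G.erase x))) := by
          intro y hyx
          have hyd : y < d := lt_trans hyx hxlt
          have hseteq : insert y (B.erase x) = insert y (G.erase x) ∪ I := by
            ext a
            simp only [Finset.mem_insert, Finset.mem_erase, Finset.mem_union, hI, hG,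
              Finset.mem_sdiff, Finset.mem_inter, Finset.mem_range]
            constructor
            · rintro (rfl | ⟨hax, haB⟩)
              · exact Or.inl (Or.inl rfl)
              · by_cases had : a < d
                · exact Or.inl (Or.inr ⟨hax, haB, had⟩)
                · exact Or.inr ⟨haB, fun h => had h⟩
            · rintro ((rfl | ⟨hax, haB, _⟩) | ⟨haB, had⟩)
              · exact Or.inl rfl
              · exact Or.inr ⟨hax, haB⟩
              · exact Or.inr ⟨fun h => had (h ▸ hxlt), haB⟩
          have hsub : insert y (G.erase x) ⊆ Finset.range d :=
            Finset.insert_subset (Finset.mem_range.2 hyd)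
              ((Finset.erase_subset _ _).trans hGsub)
          rw [basis_iff_card hM hB, gamma_basis_iff hM hB hdisj, hseteq]
          simp [hsub]
        constructor
        · rintro ⟨-, y, hyx, hy⟩
          exact Or.inr ⟨hxG, y, hyx, (key y hyx).1 hy⟩
        · rintro (h | ⟨-, y, hyx, hy⟩)
          · exact absurd h hxI
          · exact ⟨hxB, y, hyx, (key y hyx).2 hy⟩
      · -- x ∈ I: condition always holds
        have hcarde : (B.erase x).card = d - 1 := by
          rw [Finset.card_erase_of_mem hxB, hBcard]
        have hdpos : 0 < d := by
          rw [← hBcard]; exact Finset.card_pos.2 ⟨x, hxB⟩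
        have hIe : Indep (B.erase x) := hM.2.2.1 _ B (Finset.erase_subset _ _) hBb.1
        obtain ⟨v, hv, hind⟩ := hM.2.2.2 (B.erase x) (Finset.range d) hIe hB.1
          (by rw [hcarde, Finset.card_range]; omega)
        rw [Finset.mem_sdiff] at hv
        have hvd : v < d := Finset.mem_range.1 hv.1
        have hxd' : d ≤ x := by
          by_contra h; exact hxd (Finset.mem_range.2 (by omega))
        constructor
        · rintro -
          exact Or.inl (Finset.mem_sdiff.2 ⟨hxB, hxd⟩)
        · rintro -
          refine ⟨hxB, v, by omega, ?_⟩
          rw [basis_iff_card hM hB]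
          refine ⟨hind, ?_⟩
          rw [Finset.card_insert_of_notMem hv.2, hcarde]
          omega
    · -- x ∉ B : both false
      have hxG : x ∉ G := fun h => hxB (hGB h)
      have hxI : x ∉ I := fun h => hxB (Finset.mem_sdiff.1 h).1
      constructor
      · rintro ⟨h, -⟩; exact absurd h hxB
      · rintro (h | ⟨h, -⟩)
        · exact absurd h hxI
        · exact absurd h hxG
  rw [hset, Finset.card_union_of_disjoint]
  rw [Finset.disjoint_left]
  intro x hxI hxr
  simp only [restrSet, Finset.mem_filter] at hxr
  exact hdisj x hxI (hGsub hxr.1)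

lemma mem_basesOf {B : Finset ℕ} :
    B ∈ basesOf Indep n ↔ B ⊆ Finset.range n ∧ IsBasisOf Indep B := by
  simp [basesOf, Finset.mem_filter, Finset.mem_powerset]

end Aux

/-- Decomposition `h(Δ,x) = ∑_I x^{|I|} h(Γ_I, x)` over independent sets
`I ⊆ [n] \ [d]`. -/
theorem stmt_4 (n d : ℕ) (Indep : Finset ℕ → Prop)
    (hM : IsMatroidOn n Indep) (hB : IsBasisOf Indep (Finset.range d)) :
    hPoly Indep n
      = ∑ I ∈ @Finset.filter _ Indep (Classical.decPred _)
          ((Finset.range n \ Finset.range d).powerset),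
          Polynomial.X ^ I.card * hPoly (GammaIndep Indep d I) d := by
  classical
  have hrange : Finset.range d ⊆ Finset.range n := hM.2.1 _ hB.1
  unfold hPoly
  have step : ∀ I ∈ @Finset.filter _ Indep (Classical.decPred _)
      ((Finset.range n \ Finset.range d).powerset),
      (Polynomial.X : Polynomial ℕ) ^ I.card *
          ∑ G ∈ basesOf (GammaIndep Indep d I) d,
            Polynomial.X ^ (restrSet (GammaIndep Indep d I) G).card
        = ∑ G ∈ basesOf (GammaIndep Indep d I) d,
            Polynomial.X ^ (I.card + (restrSet (GammaIndep Indep d I) G).card) := by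
    intro I _
    rw [Finset.mul_sum]
    exact Finset.sum_congr rfl fun G _ => (pow_add _ _ _).symm
  rw [Finset.sum_congr rfl step, Finset.sum_sigma']
  refine Finset.sum_nbij' (fun B => ⟨B \ Finset.range d, B ∩ Finset.range d⟩)
    (fun p => p.2 ∪ p.1) ?_ ?_ ?_ ?_ ?_
  · intro B hBmem
    rw [mem_basesOf] at hBmem
    obtain ⟨hBsub, hBb⟩ := hBmem
    rw [Finset.mem_sigma]
    constructor
    · rw [Finset.mem_filter, Finset.mem_powerset]
      exact ⟨Finset.sdiff_subset_sdiff hBsub (le_refl _),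
        hM.2.2.1 _ B Finset.sdiff_subset hBb.1⟩
    · rw [mem_basesOf]
      refine ⟨Finset.inter_subset_right, ?_⟩
      rw [gamma_basis_iff hM hB (fun x hx => (Finset.mem_sdiff.1 hx).2)]
      have hU : B ∩ Finset.range d ∪ B \ Finset.range d = B := by
        ext a
        simp only [Finset.mem_union, Finset.mem_inter, Finset.mem_sdiff]
        tauto
      rw [hU]
      exact ⟨Finset.inter_subset_right, hBb.1, ((basis_iff_card hM hB).1 hBb).2⟩
  · rintro ⟨I, G⟩ hmem
    rw [Finset.mem_sigma] at hmem
    obtain ⟨hImem, hGmem⟩ := hmem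
    rw [Finset.mem_filter, Finset.mem_powerset] at hImem
    rw [mem_basesOf] at hGmem
    have hdisj : ∀ x ∈ I, x ∉ Finset.range d := fun x hx =>
      (Finset.mem_sdiff.1 (hImem.1 hx)).2
    obtain ⟨hGsub, hGI, hGIcard⟩ := (gamma_basis_iff hM hB hdisj).1 hGmem.2
    rw [mem_basesOf]
    constructor
    · exact Finset.union_subset (hGsub.trans hrange)
        (hImem.1.trans Finset.sdiff_subset)
    · exact (basis_iff_card hM hB).2 ⟨hGI, hGIcard⟩
  · intro B hBmem
    ext a
    simp only [Finset.mem_union, Finset.mem_inter, Finset.mem_sdiff]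
    tauto
  · rintro ⟨I, G⟩ hmem
    rw [Finset.mem_sigma] at hmem
    obtain ⟨hImem, hGmem⟩ := hmem
    rw [Finset.mem_filter, Finset.mem_powerset] at hImem
    rw [mem_basesOf] at hGmem
    have hdisj : ∀ x ∈ I, x ∉ Finset.range d := fun x hx =>
      (Finset.mem_sdiff.1 (hImem.1 hx)).2
    have hGsub : G ⊆ Finset.range d := hGmem.1
    have h1 : (G ∪ I) \ Finset.range d = I := by
      ext a
      simp only [Finset.mem_sdiff, Finset.mem_union]
      constructor
      · rintro ⟨h | h, hnd⟩
        · exact absurd (hGsub h) hnd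
        · exact h
      · intro h
        exact ⟨Or.inr h, hdisj a h⟩
    have h2 : (G ∪ I) ∩ Finset.range d = G := by
      ext a
      simp only [Finset.mem_inter, Finset.mem_union]
      constructor
      · rintro ⟨h | h, hd⟩
        · exact h
        · exact absurd hd (hdisj a h)
      · intro h
        exact ⟨Or.inl h, hGsub h⟩
    simp only
    rw [h1, h2]
  · intro B hBmem
    rw [mem_basesOf] at hBmem
    rw [restr_card hM hB hBmem.2]
end

section
/- Let Δ be a matroid of rank d. Then h_d(Δ) = 0 if and only if Δ is a cone, i.e., Δ has a coloop (an element contained in every basis). -/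
theorem cmem_filter {α : Type*} {p : α → Prop} {s : Finset α} {a : α} :
    a ∈ @Finset.filter _ p (Classical.decPred p) s ↔ a ∈ s ∧ p a := @Finset.mem_filter _ p (Classical.decPred p) s a

theorem cfilter_subset {α : Type*} (p : α → Prop) (s : Finset α) :
    @Finset.filter _ p (Classical.decPred p) s ⊆ s := @Finset.filter_subset _ p (Classical.decPred p) s

theorem cfilter_eq_empty {α : Type*} {p : α → Prop} {s : Finset α} :
    @Finset.filter _ p (Classical.decPred p) s = ∅ ↔ ∀ x ∈ s, ¬ p x :=
  @Finset.filter_eq_empty_iff _ p (Classical.decPred p) s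

section Aux
variable {n d : ℕ} {Indep : Finset ℕ → Prop}

theorem bases_card_le (hM : IsMatroidOn n Indep) {B C : Finset ℕ}
    (hB : IsBasisOf Indep B) (hC : IsBasisOf Indep C) : C.card ≤ B.card := by
  by_contra hlt
  push_neg at hlt
  obtain ⟨v, hv, hvI⟩ := hM.2.2.2 B C hB.1 hC.1 hlt
  simp only [Finset.mem_sdiff] at hv
  have := hB.2 _ hvI (Finset.subset_insert _ _)
  exact hv.2 (this ▸ Finset.mem_insert_self v B)

theorem bases_card_eq (hM : IsMatroidOn n Indep) {B C : Finset ℕ}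
    (hB : IsBasisOf Indep B) (hC : IsBasisOf Indep C) : C.card = B.card :=
  le_antisymm (bases_card_le hM hB hC) (bases_card_le hM hC hB)

theorem indep_card_basis (hM : IsMatroidOn n Indep) {B I : Finset ℕ}
    (hB : IsBasisOf Indep B) (hI : Indep I) (hcard : I.card = B.card) :
    IsBasisOf Indep I := by
  refine ⟨hI, fun C hC hIC => ?_⟩
  have hCle : C.card ≤ B.card := by
    by_contra hlt
    push_neg at hlt
    obtain ⟨v, hv, hvI⟩ := hM.2.2.2 B C hB.1 hC hlt
    simp only [Finset.mem_sdiff] at hv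
    have := hB.2 _ hvI (Finset.subset_insert _ _)
    exact hv.2 (this ▸ Finset.mem_insert_self v B)
  exact (Finset.eq_of_subset_of_card_le hIC (hcard ▸ hCle)).symm

theorem basis_exchange (hM : IsMatroidOn n Indep) {B B' : Finset ℕ} {x : ℕ}
    (hB : IsBasisOf Indep B) (hB' : IsBasisOf Indep B') (hx : x ∈ B) (hx' : x ∉ B') :
    ∃ y, y ∈ B' ∧ y ∉ B ∧ IsBasisOf Indep (insert y (B.erase x)) := by
  have hcards : B'.card = B.card := bases_card_eq hM hB hB'
  have hIe : Indep (B.erase x) := hM.2.2.1 _ _ (Finset.erase_subset _ _) hB.1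
  have hlt : (B.erase x).card < B'.card := by
    rw [Finset.card_erase_of_mem hx, hcards]
    exact Nat.sub_lt (Finset.card_pos.mpr ⟨x, hx⟩) one_pos
  obtain ⟨y, hy, hyI⟩ := hM.2.2.2 _ _ hIe hB'.1 hlt
  simp only [Finset.mem_sdiff] at hy
  have hyx : y ≠ x := fun h => hx' (h ▸ hy.1)
  have hyB : y ∉ B := fun h => hy.2 (Finset.mem_erase.mpr ⟨hyx, h⟩)
  refine ⟨y, hy.1, hyB, indep_card_basis hM hB hyI ?_⟩
  rw [Finset.card_insert_of_notMem hy.2, Finset.card_erase_of_mem hx]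
  have : 1 ≤ B.card := Finset.card_pos.mpr ⟨x, hx⟩
  omega

end Aux

/-- For a rank `d` matroid, `h_d = 0` iff the matroid is a cone
(has a coloop, i.e. an element in every basis). -/
theorem stmt_5 (n d : ℕ) (Indep : Finset ℕ → Prop)
    (hM : IsMatroidOn n Indep)
    (hrk : ∃ B, IsBasisOf Indep B ∧ B.card = d) :
    hVec Indep n d = 0 ↔ ∃ e, ∀ B, IsBasisOf Indep B → e ∈ B := by
  obtain ⟨B₀, hB₀, hB₀card⟩ := hrk
  have hcard : ∀ B, IsBasisOf Indep B → B.card = d := fun B hB =>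
    (bases_card_eq hM hB hB₀).symm.trans hB₀card
  have hmem : ∀ B, IsBasisOf Indep B → B ∈ basesOf Indep n := by
    intro B hB
    simp only [basesOf, cmem_filter, Finset.mem_powerset]
    exact ⟨hM.2.1 _ hB.1, hB⟩
  constructor
  · -- h_d = 0 → coloop exists
    intro h0
    by_contra hco
    push_neg at hco
    -- take a max-weight basis
    obtain ⟨B, hBmem, hBmax⟩ := (basesOf Indep n).exists_max_image
      (fun B => ∑ x ∈ B, 2 ^ x) ⟨B₀, hmem _ hB₀⟩
    have hB : IsBasisOf Indep B := (cmem_filter.mp hBmem).2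
    have hsub : B ⊆ restrSet Indep B := by
      intro x hx
      obtain ⟨B', hB', hxB'⟩ := hco x
      obtain ⟨y, hyB', hyB, hbasis⟩ := basis_exchange hM hB hB' hx hxB'
      have hyx : y < x := by
        rcases lt_trichotomy y x with h | h | h
        · exact h
        · exact absurd (h ▸ hx) hyB
        · exfalso
          have hle := hBmax _ (hmem _ hbasis)
          have hyne : y ∉ B.erase x := fun hc => hyB (Finset.mem_of_mem_erase hc)
          rw [Finset.sum_insert hyne] at hle
          have h1 : 2 ^ x + ∑ z ∈ B.erase x, 2 ^ z = ∑ z ∈ B, 2 ^ z :=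
            Finset.add_sum_erase _ _ hx
          have h2 : (2:ℕ) ^ x < 2 ^ y := Nat.pow_lt_pow_right one_lt_two h
          omega
      exact cmem_filter.mpr ⟨hx, y, hyx, hbasis⟩
    have : restrSet Indep B = B :=
      Finset.Subset.antisymm (cfilter_subset _ _) hsub
    have hBin : B ∈ @Finset.filter _ (fun B => (restrSet Indep B).card = d)
        (Classical.decPred _) (basesOf Indep n) :=
      cmem_filter.mpr ⟨hBmem, by rw [this]; exact hcard _ hB⟩
    have : hVec Indep n d ≠ 0 := by
      unfold hVec
      exact Finset.card_ne_zero_of_mem hBin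
    exact this h0
  · -- coloop → h_d = 0
    rintro ⟨e, he⟩
    unfold hVec
    rw [Finset.card_eq_zero, cfilter_eq_empty]
    intro B hBmem hrB
    have hB : IsBasisOf Indep B := (cmem_filter.mp hBmem).2
    have heB : e ∈ B := he _ hB
    have hrsub : restrSet Indep B ⊆ B := cfilter_subset _ _
    have : restrSet Indep B = B := Finset.eq_of_subset_of_card_le hrsub
      (by rw [hrB, hcard _ hB])
    have : e ∈ restrSet Indep B := this.symm ▸ heB
    obtain ⟨-, y, hyx, hbasis⟩ := cmem_filter.mp this
    have : e ∈ insert y (B.erase e) := he _ hbasis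
    rcases Finset.mem_insert.mp this with h | h
    · omega
    · exact (Finset.notMem_erase _ _) h
end

section
/- Let Δ be a matroid of rank 3 on ground set [n] with [3] a basis, and let I = {x, y} ⊆ [n] \ [3] be an independent set. If h(Γ_I) = (1, 0) (i.e., Γ_I has a unique basis), then there exists z ∈ [n] \ ([3] ∪ {x, y}) such that {x, y, z} is independent in Δ, provided Δ has no coloops. -/
/-- Rank 3, `I = {x,y}` with `h(Γ_I) = (1,0)` (unique basis): if `Δ` has no
coloops, `{x,y}` extends to an independent set `{x,y,z}` with `z ∉ [3]`. -/
theorem stmt_9 (n : ℕ) (Indep : Finset ℕ → Prop)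
    (hM : IsMatroidOn n Indep) (hB : IsBasisOf Indep (Finset.range 3))
    (hnc : ¬ ∃ e, ∀ B, IsBasisOf Indep B → e ∈ B)
    (x y : ℕ) (hx : x ∉ Finset.range 3) (hy : y ∉ Finset.range 3) (hxy : x ≠ y)
    (hI : Indep {x, y})
    (h0 : hVec (GammaIndep Indep 3 {x, y}) 3 0 = 1)
    (h1 : hVec (GammaIndep Indep 3 {x, y}) 3 1 = 0) :
    ∃ z ∈ Finset.range n, z ∉ Finset.range 3 ∧ z ≠ x ∧ z ≠ y ∧
      Indep {x, y, z} := by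
  obtain ⟨hemp, hss, hdown, hexch⟩ := hM
  obtain ⟨hR3, hR3max⟩ := hB
  have hcxy : ({x, y} : Finset ℕ).card = 2 := by
    rw [Finset.card_insert_of_notMem (by simp [hxy]), Finset.card_singleton]
  have hcard3 : ∀ J, Indep J → J.card ≤ 3 := by
    intro J hJ
    by_contra h
    push_neg at h
    obtain ⟨v, hv, hvi⟩ := hexch (Finset.range 3) J hR3 hJ (by simpa using h)
    have heq := hR3max _ hvi (Finset.subset_insert _ _)
    rw [Finset.mem_sdiff] at hv
    exact hv.2 (heq ▸ Finset.mem_insert_self v _)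
  obtain ⟨g, hg, hgind⟩ := hexch {x, y} (Finset.range 3) hI hR3 (by simp [hcxy])
  rw [Finset.mem_sdiff] at hg
  have hsingbasis : ∀ a, a ∈ Finset.range 3 → Indep (insert a {x, y}) →
      IsBasisOf (GammaIndep Indep 3 {x, y}) {a} := by
    intro a ha hai
    constructor
    · refine ⟨by simpa using ha, ?_⟩
      show Indep ({a} ∪ {x, y})
      have he : ({a} ∪ {x, y} : Finset ℕ) = insert a {x, y} := by
        ext u; simp; tauto
      rwa [he]
    · intro C hC hsub
      have hdisj : Disjoint C ({x, y} : Finset ℕ) := by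
        rw [Finset.disjoint_left]
        intro u hu
        have hur := hC.1 hu
        simp only [Finset.mem_insert, Finset.mem_singleton]
        rintro (rfl | rfl)
        exacts [hx hur, hy hur]
      have hcardC : C.card ≤ 1 := by
        have h3 := hcard3 _ hC.2
        rw [Finset.card_union_of_disjoint hdisj, hcxy] at h3
        omega
      exact (Finset.eq_of_subset_of_card_le hsub (by simpa using hcardC)).symm
  have huniq : ∀ a, a ∈ Finset.range 3 → Indep (insert a {x, y}) → a = g := by
    intro a ha hai
    by_contra hne
    set b := max a g with hb
    set c := min a g with hc
    have hcb : c < b := by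
      rcases lt_or_gt_of_ne hne with h | h
      · rw [hb, hc, max_eq_right h.le, min_eq_left h.le]; exact h
      · rw [hb, hc, max_eq_left h.le, min_eq_right h.le]; exact h
    have hbB : IsBasisOf (GammaIndep Indep 3 {x, y}) {b} := by
      rcases max_choice a g with h | h <;> rw [hb, h]
      exacts [hsingbasis a ha hai, hsingbasis g hg.1 hgind]
    have hcB : IsBasisOf (GammaIndep Indep 3 {x, y}) {c} := by
      rcases min_choice a g with h | h <;> rw [hc, h]
      exacts [hsingbasis a ha hai, hsingbasis g hg.1 hgind]
    have hbrange : b ∈ Finset.range 3 := by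
      rcases max_choice a g with h | h <;> rw [hb, h]
      exacts [ha, hg.1]
    have hcB' : IsBasisOf (GammaIndep Indep 3 {x, y})
        (insert c (({b} : Finset ℕ).erase b)) := by
      rw [Finset.erase_singleton]
      have he : (insert c ∅ : Finset ℕ) = {c} := rfl
      rwa [he]
    have hbrestr : b ∈ restrSet (GammaIndep Indep 3 {x, y}) {b} := by
      rw [restrSet]
      exact (@Finset.mem_filter _ _ (Classical.decPred _) _ _).mpr
        ⟨Finset.mem_singleton_self b, c, hcb, hcB'⟩
    have hrcard : (restrSet (GammaIndep Indep 3 {x, y}) {b}).card = 1 := by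
      have hsub : restrSet (GammaIndep Indep 3 {x, y}) {b} ⊆ {b} := by
        rw [restrSet]; exact @Finset.filter_subset _ _ (Classical.decPred _) _
      have h1' : ({b} : Finset ℕ) ⊆ restrSet (GammaIndep Indep 3 {x, y}) {b} :=
        Finset.singleton_subset_iff.mpr hbrestr
      rw [Finset.Subset.antisymm hsub h1', Finset.card_singleton]
    have hbbases : ({b} : Finset ℕ) ∈ basesOf (GammaIndep Indep 3 {x, y}) 3 := by
      rw [basesOf]
      exact (@Finset.mem_filter _ _ (Classical.decPred _) _ _).mpr
        ⟨Finset.mem_powerset.mpr (by simpa using hbrange), hbB⟩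
    rw [hVec, Finset.card_eq_zero, Finset.eq_empty_iff_forall_notMem] at h1
    exact h1 {b} ((@Finset.mem_filter _ _ (Classical.decPred _) _ _).mpr ⟨hbbases, hrcard⟩)
  push_neg at hnc
  obtain ⟨B, hBb, hgB⟩ := hnc g
  have hBcard : 3 ≤ B.card := by
    by_contra h
    push_neg at h
    obtain ⟨v, hv, hvi⟩ := hexch B (Finset.range 3) hBb.1 hR3
      (by simpa using Nat.lt_of_lt_of_le h (by simp))
    have heq := hBb.2 _ hvi (Finset.subset_insert _ _)
    rw [Finset.mem_sdiff] at hv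
    exact hv.2 (heq ▸ Finset.mem_insert_self v _)
  obtain ⟨v, hv, hvi⟩ := hexch {x, y} B hI hBb.1 (by omega)
  rw [Finset.mem_sdiff] at hv
  have hvnr : v ∉ Finset.range 3 := by
    intro hvr
    exact hgB ((huniq v hvr hvi) ▸ hv.1)
  have hvx : v ≠ x := by intro h; exact hv.2 (by simp [h])
  have hvy : v ≠ y := by intro h; exact hv.2 (by simp [h])
  refine ⟨v, hss B hBb.1 hv.1, hvnr, hvx, hvy, ?_⟩
  have : ({x, y, v} : Finset ℕ) = insert v {x, y} := by
    ext u; simp only [Finset.mem_insert, Finset.mem_singleton]; tauto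
  rwa [this]
end

section
/- Let Δ be a rank-3 matroid on [n] with [3] a basis, and let I = {x, y} ⊆ [n] \ [3] be independent. If h(Γ_I) = (1, 2), i.e., Γ_I has 3 bases (all three singletons of [3] extend I to a basis of Δ), then |B_x| ≥ 2 and |B_y| ≥ 2, where B_x denotes the set of bases of Γ_{\{x\}} (equivalently, the subsets G ⊆ [3] with |G| = 2 and G ∪ {x} a basis of Δ). -/
lemma indep_card_le_three {n : ℕ} {Indep : Finset ℕ → Prop}
    (hM : IsMatroidOn n Indep) (hB : IsBasisOf Indep (Finset.range 3)) :
    ∀ C, Indep C → C.card ≤ 3 := by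
  intro C hC
  by_contra h
  push_neg at h
  obtain ⟨v, hv, hvi⟩ := hM.2.2.2 (Finset.range 3) C hB.1 hC (by simpa using h)
  have heq := hB.2 _ hvi (Finset.subset_insert _ _)
  have hv' : v ∉ Finset.range 3 := (Finset.mem_sdiff.mp hv).2
  exact hv' (heq ▸ Finset.mem_insert_self v _)

/-- A 2-element subset of `range 3` extending `z` independently is a basis of `Γ_{z}`. -/
lemma mem_bases_of_pair {n : ℕ} {Indep : Finset ℕ → Prop}
    (hM : IsMatroidOn n Indep) (hB : IsBasisOf Indep (Finset.range 3))
    {z : ℕ} (hz : z ∉ Finset.range 3) {G : Finset ℕ}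
    (hG3 : G ⊆ Finset.range 3) (hGcard : G.card = 2) (hGi : Indep (G ∪ {z})) :
    G ∈ basesOf (GammaIndep Indep 3 {z}) 3 := by
  have hbasis : IsBasisOf (GammaIndep Indep 3 {z}) G := by
    refine ⟨⟨hG3, hGi⟩, ?_⟩
    rintro C ⟨hC3, hCi⟩ hGC
    have hzC : z ∉ C := fun h => hz (hC3 h)
    have h1 : C ∪ {z} = insert z C := by ext a; simp [or_comm]
    have h2 : (C ∪ {z}).card ≤ 3 := indep_card_le_three hM hB _ hCi
    rw [h1, Finset.card_insert_of_notMem hzC] at h2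
    exact (Finset.eq_of_subset_of_card_le hGC (by omega)).symm
  simp only [basesOf, Finset.mem_filter, Finset.mem_powerset]
  exact ⟨hG3, hbasis⟩

/-- If all three singletons of `range 3` extend `z` independently, `Γ_{z}` has at
least two bases. -/
lemma two_bases {n : ℕ} {Indep : Finset ℕ → Prop}
    (hM : IsMatroidOn n Indep) (hB : IsBasisOf Indep (Finset.range 3))
    {z : ℕ} (hz : z ∉ Finset.range 3)
    (hind : ∀ i ∈ Finset.range 3, Indep (insert i {z})) :
    2 ≤ numBases (GammaIndep Indep 3 {z}) 3 := by
  have h0z : Indep (insert 0 {z}) := hind 0 (by simp)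
  have hzne : ∀ i, i < 3 → z ≠ i := by
    intro i hi h; exact hz (by simpa [h] using Finset.mem_range.mpr hi)
  have hc02 : (insert 0 ({z} : Finset ℕ)).card = 2 := by
    rw [Finset.card_insert_of_notMem (by simp [(hzne 0 (by norm_num)).symm])]; simp
  -- first exchange: grow {0, z} inside range 3
  obtain ⟨v, hv, hvi⟩ := hM.2.2.2 _ (Finset.range 3) h0z hB.1 (by simp [hc02])
  rw [Finset.mem_sdiff] at hv
  have hv3 : v < 3 := Finset.mem_range.mp hv.1
  have hv0 : v ≠ 0 := fun h => hv.2 (by simp [h])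
  have hvz : v ≠ z := fun h => hv.2 (by simp [h])
  -- second exchange: grow {c, z} inside {v, 0, z}
  set c : ℕ := if v = 1 then 2 else 1 with hc
  have hv12 : v = 1 ∨ v = 2 := by omega
  have hc12 : c = 1 ∨ c = 2 := by rcases hv12 with h | h <;> simp [hc, h]
  have hcv : c ≠ v := by rcases hv12 with h | h <;> simp [hc, h] <;> omega
  have hc0 : c ≠ 0 := by omega
  have hcz : c ≠ z := by have := hzne c (by omega); omega
  have hcz' : Indep (insert c {z}) := hind c (by simp; omega)
  have hccard : (insert c ({z} : Finset ℕ)).card = 2 := by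
    rw [Finset.card_insert_of_notMem (by simpa using hcz)]; simp
  have hvcard : (insert v (insert 0 ({z} : Finset ℕ))).card = 3 := by
    rw [Finset.card_insert_of_notMem (by simp [hv0, hvz]), hc02]
  obtain ⟨w, hw, hwi⟩ := hM.2.2.2 _ _ hcz' hvi (by omega)
  rw [Finset.mem_sdiff] at hw
  have hwc : w ≠ c := fun h => hw.2 (by simp [h])
  have hwz : w ≠ z := fun h => hw.2 (by simp [h])
  have hwv0 : w = v ∨ w = 0 := by
    have := hw.1; simp [Finset.mem_insert] at this; tauto
  have hw3 : w < 3 := by omega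
  -- the two bases
  have hG1 : ({v, 0} : Finset ℕ) ∈ basesOf (GammaIndep Indep 3 {z}) 3 := by
    refine mem_bases_of_pair hM hB hz ?_ ?_ ?_
    · intro a ha; simp [Finset.mem_insert] at ha
      simp only [Finset.mem_range]; omega
    · rw [Finset.card_insert_of_notMem (by simp [hv0])]; simp
    · have : ({v, 0} : Finset ℕ) ∪ {z} = insert v (insert 0 {z}) := by
        ext a; simp [Finset.mem_insert, Finset.mem_union] <;> tauto
      rw [this]; exact hvi
  have hG2 : ({w, c} : Finset ℕ) ∈ basesOf (GammaIndep Indep 3 {z}) 3 := by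
    refine mem_bases_of_pair hM hB hz ?_ ?_ ?_
    · intro a ha; simp [Finset.mem_insert] at ha
      simp only [Finset.mem_range]; omega
    · rw [Finset.card_insert_of_notMem (by simp [hwc])]; simp
    · have : ({w, c} : Finset ℕ) ∪ {z} = insert w (insert c {z}) := by
        ext a; simp [Finset.mem_insert, Finset.mem_union] <;> tauto
      rw [this]; exact hwi
  have hne : ({v, 0} : Finset ℕ) ≠ {w, c} := by
    intro h
    have : c ∈ ({v, 0} : Finset ℕ) := h ▸ (by simp)
    simp [Finset.mem_insert] at this
    rcases this with h' | h' <;> [exact hcv h'; exact hc0 h']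
  have hsub : ({({v, 0} : Finset ℕ), {w, c}} : Finset (Finset ℕ)) ⊆
      basesOf (GammaIndep Indep 3 {z}) 3 := by
    intro A hA; simp [Finset.mem_insert] at hA
    rcases hA with h | h <;> simp [h, hG1, hG2]
  calc 2 = ({({v, 0} : Finset ℕ), {w, c}} : Finset (Finset ℕ)).card := by
        rw [Finset.card_insert_of_notMem (by simpa using hne)]; simp
    _ ≤ _ := Finset.card_le_card hsub

/-- Rank 3, `I = {x,y}` with `h(Γ_I) = (1,2)`: both `|B_x| ≥ 2` and `|B_y| ≥ 2`. -/
theorem stmt_10 (n : ℕ) (Indep : Finset ℕ → Prop)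
    (hM : IsMatroidOn n Indep) (hB : IsBasisOf Indep (Finset.range 3))
    (x y : ℕ) (hx : x ∉ Finset.range 3) (hy : y ∉ Finset.range 3) (hxy : x ≠ y)
    (hI : Indep {x, y})
    (h0 : hVec (GammaIndep Indep 3 {x, y}) 3 0 = 1)
    (h1 : hVec (GammaIndep Indep 3 {x, y}) 3 1 = 2) :
    2 ≤ numBases (GammaIndep Indep 3 {x}) 3 ∧
    2 ≤ numBases (GammaIndep Indep 3 {y}) 3 := by
  classical
  set Γ := GammaIndep Indep 3 ({x, y} : Finset ℕ) with hΓ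
  -- every basis of Γ has at most one element
  have hcard1 : ∀ B ∈ basesOf Γ 3, B.card ≤ 1 := by
    intro B hBmem
    simp only [basesOf, Finset.mem_filter, Finset.mem_powerset] at hBmem
    obtain ⟨hB3, hBbasis⟩ := hBmem
    have hBi : Indep (B ∪ {x, y}) := hBbasis.1.2
    have hxB : x ∉ B := fun h => hx (hB3 h)
    have hyB : y ∉ B := fun h => hy (hB3 h)
    have heq : B ∪ {x, y} = insert x (insert y B) := by
      ext a; simp [Finset.mem_insert, Finset.mem_union]
    have h3 := indep_card_le_three hM hB _ hBi
    rw [heq, Finset.card_insert_of_notMem (by simp [hxy, hxB]),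
      Finset.card_insert_of_notMem hyB] at h3
    omega
  -- Γ has exactly three bases
  have hScard : (basesOf Γ 3).card = 3 := by
    have hrle : ∀ B ∈ basesOf Γ 3, (restrSet Γ B).card ≤ 1 := by
      intro B hBmem
      have hsub : restrSet Γ B ⊆ B := by
        intro a ha
        simp only [restrSet, Finset.mem_filter] at ha
        exact ha.1
      exact le_trans (Finset.card_le_card hsub) (hcard1 B hBmem)
    have hkey := @Finset.card_filter_add_card_filter_not _ (basesOf Γ 3)
      (fun B => (restrSet Γ B).card = 0) (Classical.decPred _)
      (fun _ => Classical.propDecidable _)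
    have hfe : @Finset.filter _ (fun B => ¬ (restrSet Γ B).card = 0)
          (fun _ => Classical.propDecidable _) (basesOf Γ 3)
        = @Finset.filter _ (fun B => (restrSet Γ B).card = 1) (Classical.decPred _)
          (basesOf Γ 3) := by
      ext B
      simp only [Finset.mem_filter]
      constructor <;> rintro ⟨hBmem, h⟩ <;>
        exact ⟨hBmem, by have := hrle B hBmem; omega⟩
    have e0 := h0
    have e1 := h1
    simp only [hVec] at e0 e1
    rw [hfe, e0, e1] at hkey
    omega
  -- the empty set is not a basis
  have hempty : (∅ : Finset ℕ) ∉ basesOf Γ 3 := by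
    intro hmem
    have hsub : basesOf Γ 3 ⊆ {∅} := by
      intro B hBmem
      simp only [basesOf, Finset.mem_filter, Finset.mem_powerset] at hmem hBmem
      have := hmem.2.2 B hBmem.2.1 (Finset.empty_subset B)
      simp [this]
    have := Finset.card_le_card hsub
    simp [hScard] at this
  -- hence the bases are exactly the three singletons
  have hSsub : basesOf Γ 3 ⊆ ({({0} : Finset ℕ), {1}, {2}} : Finset (Finset ℕ)) := by
    intro B hBmem
    have hc := hcard1 B hBmem
    have hBne : B ≠ ∅ := fun h => hempty (h ▸ hBmem)
    have hc1 : B.card = 1 := by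
      have := Finset.card_pos.mpr (Finset.nonempty_of_ne_empty hBne); omega
    obtain ⟨a, rfl⟩ := Finset.card_eq_one.mp hc1
    have hB3 : ({a} : Finset ℕ) ⊆ Finset.range 3 := by
      simp only [basesOf, Finset.mem_filter, Finset.mem_powerset] at hBmem
      exact hBmem.1
    have ha3 : a < 3 := Finset.mem_range.mp (hB3 (by simp))
    interval_cases a <;> simp
  have hSeq : basesOf Γ 3 = ({({0} : Finset ℕ), {1}, {2}} : Finset (Finset ℕ)) := by
    apply Finset.eq_of_subset_of_card_le hSsub
    rw [hScard]
    decide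
  have hall : ∀ i ∈ Finset.range 3, Indep (insert i ({x, y} : Finset ℕ)) := by
    intro i hi
    have hi3 : i < 3 := Finset.mem_range.mp hi
    have hmem : ({i} : Finset ℕ) ∈ basesOf Γ 3 := by
      rw [hSeq]; interval_cases i <;> simp
    simp only [basesOf, Finset.mem_filter, Finset.mem_powerset] at hmem
    have := hmem.2.1.2
    have heq : ({i} : Finset ℕ) ∪ {x, y} = insert i {x, y} := by
      ext a; simp [Finset.mem_insert, Finset.mem_union] <;> tauto
    rwa [heq] at this
  constructor
  · refine two_bases hM hB hx (fun i hi => ?_)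
    refine hM.2.2.1 _ _ ?_ (hall i hi)
    intro a ha; simp [Finset.mem_insert] at ha ⊢; tauto
  · refine two_bases hM hB hy (fun i hi => ?_)
    refine hM.2.2.1 _ _ ?_ (hall i hi)
    intro a ha; simp [Finset.mem_insert] at ha ⊢; tauto
end

section
/- Let Δ be a rank-4 matroid on [n] with [4] a basis, and let I = {x, y, z} ⊆ [n] \ [4] be independent with h(Γ_I) = (1, 3), i.e., every element of [4] completes I to a basis of Δ. Then min{|B_x|, |B_y|, |B_z|} ≥ 2, where B_v is the number of bases of Γ_{\{v\}}. -/
-- card bound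
lemma aux_card_le4 (n : ℕ) (Indep : Finset ℕ → Prop)
    (hM : IsMatroidOn n Indep) (hB : IsBasisOf Indep (Finset.range 4)) :
    ∀ J, Indep J → J.card ≤ 4 := by
  intro J hJ
  by_contra h
  push_neg at h
  obtain ⟨w, hw, hins⟩ := hM.2.2.2 (Finset.range 4) J hB.1 hJ (by simpa using h)
  have heq := hB.2 _ hins (Finset.subset_insert _ _)
  have : w ∈ Finset.range 4 := by rw [← heq]; exact Finset.mem_insert_self _ _
  exact (Finset.mem_sdiff.1 hw).2 this

-- extension to card 3
lemma aux_extend (n : ℕ) (Indep : Finset ℕ → Prop)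
    (hM : IsMatroidOn n Indep) (hB : IsBasisOf Indep (Finset.range 4))
    (v : ℕ) (hv : v ∉ Finset.range 4) :
    ∀ k T, T ⊆ Finset.range 4 → Indep (T ∪ {v}) → T.card + k = 3 →
      ∃ G, T ⊆ G ∧ G ⊆ Finset.range 4 ∧ G.card = 3 ∧ Indep (G ∪ {v}) := by
  intro k
  induction k with
  | zero => intro T hTr hTi hc; exact ⟨T, subset_rfl, hTr, by omega, hTi⟩
  | succ k ih =>
    intro T hTr hTi hc
    have hdisj : Disjoint T {v} := by
      simp only [Finset.disjoint_singleton_right]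
      exact fun hvT => hv (hTr hvT)
    have hcard : (T ∪ {v}).card = T.card + 1 := by
      rw [Finset.card_union_of_disjoint hdisj, Finset.card_singleton]
    obtain ⟨w, hw, hins⟩ := hM.2.2.2 (T ∪ {v}) (Finset.range 4) hTi hB.1
      (by rw [hcard, Finset.card_range]; omega)
    rw [Finset.mem_sdiff] at hw
    have hwv : w ≠ v := by
      intro h; exact hw.2 (by simp [h])
    have hwT : w ∉ T := fun h => hw.2 (Finset.mem_union_left _ h)
    have hins' : Indep (insert w T ∪ {v}) := by
      rw [Finset.insert_union]; exact hins
    have := ih (insert w T) (Finset.insert_subset hw.1 hTr) hins'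
      (by rw [Finset.card_insert_of_notMem hwT]; omega)
    obtain ⟨G, hG1, hG2, hG3, hG4⟩ := this
    exact ⟨G, (Finset.subset_insert _ _).trans hG1, hG2, hG3, hG4⟩

-- two bases for Γ_{v}
lemma aux_two_bases (n : ℕ) (Indep : Finset ℕ → Prop)
    (hM : IsMatroidOn n Indep) (hB : IsBasisOf Indep (Finset.range 4))
    (v : ℕ) (hv : v ∉ Finset.range 4)
    (hall : ∀ a ∈ Finset.range 4, Indep (insert a {v})) :
    2 ≤ numBases (GammaIndep Indep 4 {v}) 4 := by
  classical
  have hIv : Indep ({v} : Finset ℕ) := by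
    have := hall 0 (by simp)
    exact hM.2.2.1 _ _ (by simp) this
  -- a size-3 basis exists
  obtain ⟨G, -, hGr, hGc, hGi⟩ := aux_extend n Indep hM hB v hv 3 ∅ (by simp)
    (by simpa using hIv) (by simp)
  -- pick a ∉ G
  have hGne : G ≠ Finset.range 4 := by
    intro h; rw [h, Finset.card_range] at hGc; omega
  obtain ⟨a, har, haG⟩ : ∃ a ∈ Finset.range 4, a ∉ G := by
    by_contra h
    push_neg at h
    exact hGne (Finset.Subset.antisymm hGr h)
  -- extend {a}
  obtain ⟨G2, hG2a, hG2r, hG2c, hG2i⟩ := aux_extend n Indep hM hB v hv 2 {a}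
    (by simpa using har) (by
      rw [show ({a} : Finset ℕ) ∪ {v} = insert a {v} from by ext t; simp]
      exact hall a har)
    (by simp)
  have haG2 : a ∈ G2 := hG2a (Finset.mem_singleton_self a)
  -- any size-3 Γ_v-indep set is a basis
  have hbasis : ∀ H, H ⊆ Finset.range 4 → H.card = 3 → Indep (H ∪ {v}) →
      IsBasisOf (GammaIndep Indep 4 {v}) H := by
    intro H hHr hHc hHi
    refine ⟨⟨hHr, hHi⟩, ?_⟩
    rintro C ⟨hCr, hCi⟩ hHC
    have hdisj : Disjoint C {v} := by
      simp only [Finset.disjoint_singleton_right]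
      exact fun h => hv (hCr h)
    have hle := aux_card_le4 n Indep hM hB _ hCi
    rw [Finset.card_union_of_disjoint hdisj, Finset.card_singleton] at hle
    exact ((Finset.eq_of_subset_of_card_le hHC (by rw [hHc]; omega)).symm)
  have hGb := hbasis G hGr hGc hGi
  have hG2b := hbasis G2 hG2r hG2c hG2i
  have hne : G ≠ G2 := fun h => haG (h ▸ haG2)
  have hsub : ({G, G2} : Finset (Finset ℕ)) ⊆ basesOf (GammaIndep Indep 4 {v}) 4 := by
    intro B hBmem
    simp only [Finset.mem_insert, Finset.mem_singleton] at hBmem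
    unfold basesOf
    rw [Finset.mem_filter, Finset.mem_powerset]
    rcases hBmem with rfl | rfl
    · exact ⟨hGr, hGb⟩
    · exact ⟨hG2r, hG2b⟩
  calc 2 = ({G, G2} : Finset (Finset ℕ)).card := (Finset.card_pair hne).symm
    _ ≤ _ := Finset.card_le_card hsub

/-- Rank 4, `I = {x,y,z}` with `h(Γ_I) = (1,3)`: `min{|B_x|,|B_y|,|B_z|} ≥ 2`. -/
theorem stmt_13 (n : ℕ) (Indep : Finset ℕ → Prop)
    (hM : IsMatroidOn n Indep) (hB : IsBasisOf Indep (Finset.range 4))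
    (x y z : ℕ) (hx : x ∉ Finset.range 4) (hy : y ∉ Finset.range 4)
    (hz : z ∉ Finset.range 4) (hxy : x ≠ y) (hxz : x ≠ z) (hyz : y ≠ z)
    (hI : Indep {x, y, z})
    (h0 : hVec (GammaIndep Indep 4 {x, y, z}) 4 0 = 1)
    (h1 : hVec (GammaIndep Indep 4 {x, y, z}) 4 1 = 3) :
    2 ≤ numBases (GammaIndep Indep 4 {x}) 4 ∧
    2 ≤ numBases (GammaIndep Indep 4 {y}) 4 ∧
    2 ≤ numBases (GammaIndep Indep 4 {z}) 4 := by
  classical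
  set P := GammaIndep Indep 4 {x, y, z} with hP
  set S := basesOf P 4 with hS
  -- cardinality of I
  have hIc : ({x, y, z} : Finset ℕ).card = 3 := by
    rw [Finset.card_insert_of_notMem (by simp [hxy, hxz]),
      Finset.card_insert_of_notMem (by simp [hyz]), Finset.card_singleton]
  -- every basis of Γ_I has card ≤ 1
  have hsmall : ∀ B ∈ S, B.card ≤ 1 := by
    intro B hBmem
    rw [hS, basesOf, Finset.mem_filter, Finset.mem_powerset] at hBmem
    obtain ⟨hBr, ⟨hBind, -⟩⟩ := hBmem
    obtain ⟨-, hBi⟩ := hBind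
    have hdisj : Disjoint B ({x, y, z} : Finset ℕ) := by
      rw [Finset.disjoint_left]
      intro t htB ht
      have : t ∈ Finset.range 4 := hBr htB
      simp only [Finset.mem_insert, Finset.mem_singleton] at ht
      rcases ht with rfl | rfl | rfl
      exacts [hx this, hy this, hz this]
    have := aux_card_le4 n Indep hM hB _ hBi
    rw [Finset.card_union_of_disjoint hdisj, hIc] at this
    omega
  -- h0 + h1 ≤ |S|
  have hle : 4 ≤ S.card := by
    have e : ∀ i : ℕ, hVec P 4 i = (S.filter (fun B => (restrSet P B).card = i)).card := by
      intro i
      unfold hVec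
      rw [Finset.filter_congr_decidable]
    rw [e 0] at h0
    rw [e 1] at h1
    have hdisj : Disjoint (S.filter (fun B => (restrSet P B).card = 0))
        (S.filter (fun B => (restrSet P B).card = 1)) := by
      rw [Finset.disjoint_filter]
      intro B _ hB0 hB1
      omega
    have hsub2 : (S.filter (fun B => (restrSet P B).card = 0))
        ∪ (S.filter (fun B => (restrSet P B).card = 1)) ⊆ S :=
      Finset.union_subset (Finset.filter_subset _ _) (Finset.filter_subset _ _)
    have := Finset.card_le_card hsub2
    rw [Finset.card_union_of_disjoint hdisj, h0, h1] at this
    omega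
  -- ∅ is not a basis
  have hempty : ∅ ∉ S := by
    intro hmem
    rw [hS, basesOf, Finset.mem_filter] at hmem
    have hmax := hmem.2.2
    have : S ⊆ {∅} := by
      intro B hBmem
      rw [hS, basesOf, Finset.mem_filter] at hBmem
      have := hmax B hBmem.2.1 (Finset.empty_subset B)
      simp [this]
    have := Finset.card_le_card this
    simp only [Finset.card_singleton] at this
    omega
  -- S ⊆ image of singletons
  have hsub : S ⊆ (Finset.range 4).image (fun a => ({a} : Finset ℕ)) := by
    intro B hBmem
    have hc := hsmall B hBmem
    have hBr : B ⊆ Finset.range 4 := by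
      rw [hS, basesOf, Finset.mem_filter, Finset.mem_powerset] at hBmem
      exact hBmem.1
    interval_cases h : B.card
    · exact absurd (Finset.card_eq_zero.1 h ▸ hBmem) hempty
    · obtain ⟨a, rfl⟩ := Finset.card_eq_one.1 h
      exact Finset.mem_image.2 ⟨a, hBr (Finset.mem_singleton_self a), rfl⟩
  -- conclude equality and extract the key fact
  have heq : S = (Finset.range 4).image (fun a => ({a} : Finset ℕ)) := by
    apply Finset.eq_of_subset_of_card_le hsub
    calc ((Finset.range 4).image _).card ≤ (Finset.range 4).card := Finset.card_image_le
      _ = 4 := Finset.card_range 4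
      _ ≤ S.card := hle
  have hkey : ∀ a ∈ Finset.range 4, Indep (insert a {x, y, z}) := by
    intro a ha
    have : ({a} : Finset ℕ) ∈ S := by rw [heq]; exact Finset.mem_image.2 ⟨a, ha, rfl⟩
    rw [hS, basesOf, Finset.mem_filter] at this
    have hPa : P {a} := this.2.1
    rw [hP] at hPa
    have := hPa.2
    rwa [show ({a} : Finset ℕ) ∪ {x, y, z} = insert a {x, y, z} from by ext t; simp; tauto] at this
  -- apply the two-bases lemma to each of x, y, z
  refine ⟨?_, ?_, ?_⟩
  · exact aux_two_bases n Indep hM hB x hx (fun a ha => hM.2.2.1 _ _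
      (Finset.insert_subset_insert a (by intro t ht; simp_all)) (hkey a ha))
  · exact aux_two_bases n Indep hM hB y hy (fun a ha => hM.2.2.1 _ _
      (Finset.insert_subset_insert a (by intro t ht; simp_all)) (hkey a ha))
  · exact aux_two_bases n Indep hM hB z hz (fun a ha => hM.2.2.1 _ _
      (Finset.insert_subset_insert a (by intro t ht; simp_all)) (hkey a ha))
end

section
/- Let Δ be a rank-4 matroid on [n] with [4] a basis, and let I = {x, y, z} ⊆ [n] \ [4] be independent with h(Γ_I) = (1, 1), i.e., exactly two elements of [4] complete I to a basis of Δ. Then max{|B_x|, |B_y|, |B_z|} ≥ 2, where |B_v| is the number of bases of Γ_{\{v\}}. -/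
lemma sing_union (a : ℕ) (s : Finset ℕ) : ({a} : Finset ℕ) ∪ s = insert a s := by
  ext t; simp

lemma ins_empty (a : ℕ) : insert a (∅ : Finset ℕ) = ({a} : Finset ℕ) := by
  ext t; simp

lemma card_le_four {n : ℕ} {Indep : Finset ℕ → Prop}
    (hM : IsMatroidOn n Indep) (hB : IsBasisOf Indep (Finset.range 4)) :
    ∀ J, Indep J → J.card ≤ 4 := by
  intro J hJ
  by_contra h
  push_neg at h
  obtain ⟨v, hv, hins⟩ := hM.2.2.2 (Finset.range 4) J hB.1 hJ (by simpa using h)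
  have := hB.2 _ hins (Finset.subset_insert _ _)
  rw [Finset.mem_sdiff] at hv
  exact hv.2 (this ▸ Finset.mem_insert_self v _)

lemma ext_three {n : ℕ} {Indep : Finset ℕ → Prop}
    (hM : IsMatroidOn n Indep) (h4 : Indep (Finset.range 4)) {v : ℕ}
    (hv : v ∉ Finset.range 4) :
    ∀ k T, T ⊆ Finset.range 4 → T.card + k = 3 → Indep (insert v T) →
      ∃ G, T ⊆ G ∧ G ⊆ Finset.range 4 ∧ G.card = 3 ∧ Indep (insert v G) := by
  intro k
  induction k with
  | zero => exact fun T hT hc hi => ⟨T, subset_rfl, hT, by omega, hi⟩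
  | succ k ih =>
    intro T hT hc hi
    have hvT : v ∉ T := fun h => hv (hT h)
    have hcard : (insert v T).card < (Finset.range 4).card := by
      rw [Finset.card_insert_of_notMem hvT, Finset.card_range]; omega
    obtain ⟨w, hw, hiw⟩ := hM.2.2.2 _ _ hi h4 hcard
    rw [Finset.mem_sdiff] at hw
    have hwT : w ∉ T := fun h => hw.2 (Finset.mem_insert_of_mem h)
    rw [Finset.insert_comm] at hiw
    obtain ⟨G, h1, h2, h3, h5⟩ := ih (insert w T)
      (Finset.insert_subset hw.1 hT)
      (by rw [Finset.card_insert_of_notMem hwT]; omega) hiw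
    exact ⟨G, (Finset.subset_insert _ _).trans h1, h2, h3, h5⟩

/-- Rank 4, `I = {x,y,z}` with `h(Γ_I) = (1,1)`: `max{|B_x|,|B_y|,|B_z|} ≥ 2`. -/
theorem stmt_14 (n : ℕ) (Indep : Finset ℕ → Prop)
    (hM : IsMatroidOn n Indep) (hB : IsBasisOf Indep (Finset.range 4))
    (x y z : ℕ) (hx : x ∉ Finset.range 4) (hy : y ∉ Finset.range 4)
    (hz : z ∉ Finset.range 4) (hxy : x ≠ y) (hxz : x ≠ z) (hyz : y ≠ z)
    (hI : Indep {x, y, z})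
    (h0 : hVec (GammaIndep Indep 4 {x, y, z}) 4 0 = 1)
    (h1 : hVec (GammaIndep Indep 4 {x, y, z}) 4 1 = 1) :
    2 ≤ numBases (GammaIndep Indep 4 {x}) 4 ∨
    2 ≤ numBases (GammaIndep Indep 4 {y}) 4 ∨
    2 ≤ numBases (GammaIndep Indep 4 {z}) 4 := by
  classical
  have hIndep4 : Indep (Finset.range 4) := hB.1
  have hdown := hM.2.2.1
  have hxyz_card : ({x, y, z} : Finset ℕ).card = 3 := by
    rw [Finset.card_insert_of_notMem (by simp [hxy, hxz]),
      Finset.card_insert_of_notMem (by simp [hyz]), Finset.card_singleton]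
  set N := (Finset.range 4).filter (fun g => Indep (insert g {x, y, z})) with hNdef
  have memN_iff : ∀ g, g ∈ N ↔ g ∈ Finset.range 4 ∧ Indep (insert g {x, y, z}) := by
    intro g; rw [hNdef, Finset.mem_filter]
  have indep_small : ∀ B, GammaIndep Indep 4 {x, y, z} B → B.card ≤ 1 := by
    intro B hGB
    obtain ⟨hBsub, hBI⟩ := hGB
    have hdisj : Disjoint B {x, y, z} := by
      rw [Finset.disjoint_right]
      intro a ha haB
      have h4 := hBsub haB
      simp only [Finset.mem_insert, Finset.mem_singleton] at ha
      rcases ha with rfl | rfl | rfl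
      exacts [hx h4, hy h4, hz h4]
    have hle := card_le_four hM hB _ hBI
    rw [Finset.card_union_of_disjoint hdisj, hxyz_card] at hle
    omega
  have basis_of_memN : ∀ g ∈ N, IsBasisOf (GammaIndep Indep 4 {x, y, z}) {g} := by
    intro g hg
    rw [memN_iff] at hg
    refine ⟨⟨Finset.singleton_subset_iff.2 hg.1, by rw [sing_union]; exact hg.2⟩, ?_⟩
    intro C hC hsub
    exact (Finset.eq_of_subset_of_card_le hsub (by simpa using indep_small C hC)).symm
  have hNne : N.Nonempty := by
    by_contra hne
    rw [Finset.not_nonempty_iff_eq_empty] at hne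
    have hbasis0 : IsBasisOf (GammaIndep Indep 4 {x, y, z}) ∅ := by
      refine ⟨⟨Finset.empty_subset _, by rwa [Finset.empty_union]⟩, ?_⟩
      intro C hC _
      by_contra hCne
      have h1' := indep_small C hC
      have h2 : C.card = 1 := by
        have := Finset.card_pos.mpr (Finset.nonempty_of_ne_empty hCne)
        omega
      obtain ⟨g, rfl⟩ := Finset.card_eq_one.mp h2
      have : g ∈ N := (memN_iff g).2 ⟨hC.1 (Finset.mem_singleton_self g), by
        have := hC.2; rwa [sing_union] at this⟩
      simp [hne] at this
    have hbs : basesOf (GammaIndep Indep 4 {x, y, z}) 4 = {∅} := by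
      unfold basesOf
      ext B
      simp only [Finset.mem_filter, Finset.mem_powerset, Finset.mem_singleton]
      constructor
      · rintro ⟨hBsub, hBbasis⟩
        by_contra hBne
        have h1' := indep_small B hBbasis.1
        have h2 : B.card = 1 := by
          have := Finset.card_pos.mpr (Finset.nonempty_of_ne_empty hBne)
          omega
        obtain ⟨g, rfl⟩ := Finset.card_eq_one.mp h2
        have : g ∈ N := (memN_iff g).2 ⟨hBbasis.1.1 (Finset.mem_singleton_self g), by
          have := hBbasis.1.2; rwa [sing_union] at this⟩
        simp [hne] at this
      · rintro rfl
        exact ⟨Finset.empty_subset _, hbasis0⟩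
    have hzero : hVec (GammaIndep Indep 4 {x, y, z}) 4 1 = 0 := by
      unfold hVec
      rw [hbs, Finset.filter_singleton, if_neg (by unfold restrSet; simp), Finset.card_empty]
    omega
  -- restriction sets of singleton bases
  have hrestr : ∀ g ∈ N, restrSet (GammaIndep Indep 4 {x, y, z}) {g}
      = if ∃ g' ∈ N, g' < g then {g} else ∅ := by
    intro g hg
    unfold restrSet
    rw [Finset.filter_singleton]
    have hcond : (∃ y', y' < g ∧ IsBasisOf (GammaIndep Indep 4 {x, y, z})
        (insert y' (Finset.erase {g} g))) ↔ ∃ g' ∈ N, g' < g := by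
      rw [Finset.erase_singleton]
      constructor
      · rintro ⟨y', hlt, hbas⟩
        refine ⟨y', (memN_iff y').2 ⟨hbas.1.1 (by simp), ?_⟩, hlt⟩
        have := hbas.1.2
        rwa [ins_empty, sing_union] at this
      · rintro ⟨g', hg', hlt⟩
        refine ⟨g', hlt, ?_⟩
        rw [ins_empty]
        exact basis_of_memN g' hg'
    simp only [hcond]
  have hbases : basesOf (GammaIndep Indep 4 {x, y, z}) 4
      = N.image (fun g => ({g} : Finset ℕ)) := by
    unfold basesOf
    ext B
    simp only [Finset.mem_filter, Finset.mem_powerset, Finset.mem_image]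
    constructor
    · rintro ⟨hBsub, hBbasis⟩
      have h2 : B.card = 1 := by
        have h1' := indep_small B hBbasis.1
        by_contra hc
        have hc0 : B.card = 0 := by omega
        rw [Finset.card_eq_zero] at hc0; subst hc0
        obtain ⟨g, hg⟩ := hNne
        have := hBbasis.2 {g} (basis_of_memN g hg).1 (Finset.empty_subset _)
        simp at this
      obtain ⟨g, rfl⟩ := Finset.card_eq_one.mp h2
      refine ⟨g, (memN_iff g).2 ⟨hBbasis.1.1 (Finset.mem_singleton_self g), ?_⟩, rfl⟩
      have := hBbasis.1.2; rwa [sing_union] at this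
    · rintro ⟨g, hg, rfl⟩
      exact ⟨Finset.singleton_subset_iff.2 ((memN_iff g).1 hg).1, basis_of_memN g hg⟩
  have hNcard : N.card = 2 := by
    have hV1 : hVec (GammaIndep Indep 4 {x, y, z}) 4 1
        = (N.filter (fun g => ∃ g' ∈ N, g' < g)).card := by
      unfold hVec
      rw [hbases]
      symm
      apply Finset.card_bij (fun g _ => ({g} : Finset ℕ))
      · intro g hg
        simp only [Finset.mem_filter] at hg ⊢
        refine ⟨Finset.mem_image.2 ⟨g, hg.1, rfl⟩, ?_⟩
        rw [hrestr g hg.1, if_pos hg.2, Finset.card_singleton]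
      · intro g _ g' _ h
        simpa using h
      · intro B hB
        simp only [Finset.mem_filter] at hB
        obtain ⟨g, hg, rfl⟩ := Finset.mem_image.1 hB.1
        have hcard := hB.2
        rw [hrestr g hg] at hcard
        split_ifs at hcard with hcnd
        · exact ⟨g, Finset.mem_filter.2 ⟨hg, hcnd⟩, rfl⟩
        · simp at hcard
    rw [hV1] at h1
    have hfe : N.filter (fun g => ∃ g' ∈ N, g' < g) = N.erase (N.min' hNne) := by
      ext g
      simp only [Finset.mem_filter, Finset.mem_erase]
      constructor
      · rintro ⟨hg, g', hg', hlt⟩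
        refine ⟨fun h => ?_, hg⟩
        have := N.min'_le g' hg'
        omega
      · rintro ⟨hne, hg⟩
        have hle := N.min'_le g hg
        exact ⟨hg, N.min' hNne, N.min'_mem hNne, lt_of_le_of_ne hle (Ne.symm hne)⟩
    rw [hfe, Finset.card_erase_of_mem (N.min'_mem hNne)] at h1
    have := Finset.card_pos.mpr hNne
    omega
  obtain ⟨a, b, hab, hNab⟩ := Finset.card_eq_two.mp hNcard
  have haN : a ∈ N := by rw [hNab]; simp
  have hbN : b ∈ N := by rw [hNab]; simp
  have ha4 : a ∈ Finset.range 4 := ((memN_iff a).1 haN).1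
  have hb4 : b ∈ Finset.range 4 := ((memN_iff b).1 hbN).1
  set D := Finset.range 4 \ {a, b} with hD
  have habsub4 : ({a, b} : Finset ℕ) ⊆ Finset.range 4 :=
    Finset.insert_subset_iff.2 ⟨ha4, Finset.singleton_subset_iff.2 hb4⟩
  have hDcard : D.card = 2 := by
    rw [hD, Finset.card_sdiff_of_subset habsub4, Finset.card_range,
      Finset.card_insert_of_notMem (by simp [hab]), Finset.card_singleton]
  by_contra hcon
  push_neg at hcon
  obtain ⟨hcx, hcy, hcz⟩ := hcon
  have key : ∀ v, v ∈ ({x, y, z} : Finset ℕ) → v ∉ Finset.range 4 →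
      numBases (GammaIndep Indep 4 {v}) 4 < 2 →
      ∃ p ∈ D, ∀ q ∈ D, q ≠ p → ¬ Indep (insert v {q}) := by
    intro v hvI hv4 hnum
    have hIv : Indep {v} := hdown {v} {x, y, z} (Finset.singleton_subset_iff.2 hvI) hI
    have hbasis3 : ∀ G, G ⊆ Finset.range 4 → G.card = 3 → Indep (insert v G) →
        IsBasisOf (GammaIndep Indep 4 {v}) G := by
      intro G hGsub hG3 hGi
      refine ⟨⟨hGsub, by rwa [Finset.union_comm, sing_union]⟩, ?_⟩
      intro C hC hsub
      have hvC : v ∉ C := fun h => hv4 (hC.1 h)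
      have hCi : Indep (insert v C) := by
        have := hC.2; rwa [Finset.union_comm, sing_union] at this
      have hle := card_le_four hM hB _ hCi
      rw [Finset.card_insert_of_notMem hvC] at hle
      exact (Finset.eq_of_subset_of_card_le hsub (by omega)).symm
    have uniq : ∀ G G', G ⊆ Finset.range 4 → G.card = 3 → Indep (insert v G) →
        G' ⊆ Finset.range 4 → G'.card = 3 → Indep (insert v G') → G = G' := by
      intro G G' h1' h2' h3' h4' h5' h6'
      by_contra hne
      have hmem : ∀ H, H ⊆ Finset.range 4 → IsBasisOf (GammaIndep Indep 4 {v}) H →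
          H ∈ basesOf (GammaIndep Indep 4 {v}) 4 := by
        intro H hs hb
        unfold basesOf
        simp only [Finset.mem_filter, Finset.mem_powerset]
        exact ⟨hs, hb⟩
      have h2c : 1 < (basesOf (GammaIndep Indep 4 {v}) 4).card :=
        Finset.one_lt_card.mpr ⟨G, hmem G h1' (hbasis3 G h1' h2' h3'), G',
          hmem G' h4' (hbasis3 G' h4' h5' h6'), hne⟩
      unfold numBases at hnum
      omega
    obtain ⟨Gv, -, hGsub, hGcard, hGi⟩ := ext_three hM hIndep4 hv4 3 ∅ (by simp)
      (by simp) (by rwa [ins_empty])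
    have habG : ∀ e, e ∈ N → e ∈ Gv := by
      intro e heN
      have he4 := ((memN_iff e).1 heN).1
      have heI : Indep (insert v {e}) := by
        refine hdown _ (insert e {x, y, z})
          (Finset.insert_subset_iff.2 ⟨Finset.mem_insert_of_mem hvI,
            Finset.singleton_subset_iff.2 (Finset.mem_insert_self _ _)⟩) ((memN_iff e).1 heN).2
      obtain ⟨G', hsub', hGs', hGc', hGi'⟩ := ext_three hM hIndep4 hv4 2 {e}
        (Finset.singleton_subset_iff.2 he4) (by simp) heI
      have hGG : G' = Gv := uniq G' Gv hGs' hGc' hGi' hGsub hGcard hGi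
      exact hGG ▸ hsub' (Finset.mem_singleton_self e)
    have habsubG : ({a, b} : Finset ℕ) ⊆ Gv :=
      Finset.insert_subset_iff.2 ⟨habG a haN, Finset.singleton_subset_iff.2 (habG b hbN)⟩
    have hsd : (Gv \ {a, b}).card = 1 := by
      rw [Finset.card_sdiff_of_subset habsubG, hGcard,
        Finset.card_insert_of_notMem (by simp [hab]), Finset.card_singleton]
    obtain ⟨p, hp⟩ := Finset.card_eq_one.mp hsd
    have hpD : p ∈ D := by
      have hpmem : p ∈ Gv \ {a, b} := hp ▸ Finset.mem_singleton_self p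
      rw [Finset.mem_sdiff] at hpmem
      rw [hD, Finset.mem_sdiff]
      exact ⟨hGsub hpmem.1, hpmem.2⟩
    refine ⟨p, hpD, ?_⟩
    intro q hqD hqp hqi
    rw [hD, Finset.mem_sdiff] at hqD
    obtain ⟨G', hsub', hGs', hGc', hGi'⟩ := ext_three hM hIndep4 hv4 2 {q}
      (Finset.singleton_subset_iff.2 hqD.1) (by simp) hqi
    have hGG : G' = Gv := uniq G' Gv hGs' hGc' hGi' hGsub hGcard hGi
    have hqG : q ∈ Gv := hGG ▸ hsub' (Finset.mem_singleton_self q)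
    have : q ∈ Gv \ {a, b} := Finset.mem_sdiff.2 ⟨hqG, hqD.2⟩
    rw [hp, Finset.mem_singleton] at this
    exact hqp this
  obtain ⟨px, hpx, hdx⟩ := key x (by simp) hx hcx
  obtain ⟨py, hpy, hdy⟩ := key y (by simp) hy hcy
  obtain ⟨pz, hpz, hdz⟩ := key z (by simp) hz hcz
  have contra2 : ∀ q ∈ D, ∀ v1 ∈ ({x, y, z} : Finset ℕ), ∀ v2 ∈ ({x, y, z} : Finset ℕ),
      v1 ≠ v2 → ¬ Indep (insert v1 {q}) → ¬ Indep (insert v2 {q}) → False := by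
    intro q hqD v1 hv1 v2 hv2 hne d1 d2
    rw [hD, Finset.mem_sdiff] at hqD
    have hq4 := hqD.1
    have hqI : Indep {q} := hdown {q} (Finset.range 4) (Finset.singleton_subset_iff.2 hq4) hIndep4
    have hqx : q ∉ ({x, y, z} : Finset ℕ) := by
      intro h
      simp only [Finset.mem_insert, Finset.mem_singleton] at h
      rcases h with h | h | h <;> subst h
      exacts [hx hq4, hy hq4, hz hq4]
    obtain ⟨w1, hw1, hi1⟩ := hM.2.2.2 {q} {x, y, z} hqI hI (by rw [hxyz_card]; simp)
    rw [Finset.mem_sdiff] at hw1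
    have hw1q : w1 ≠ q := fun h => hqx (h ▸ hw1.1)
    obtain ⟨w2, hw2, hi2⟩ := hM.2.2.2 (insert w1 {q}) {x, y, z} hi1 hI
      (by rw [hxyz_card, Finset.card_insert_of_notMem (by simp [hw1q]),
        Finset.card_singleton]; omega)
    rw [Finset.mem_sdiff] at hw2
    have hi2' : Indep (insert w2 {q}) :=
      hdown _ _ (Finset.insert_subset_insert w2 (Finset.subset_insert w1 {q})) hi2
    have hw2w1 : w2 ≠ w1 := fun h => hw2.2 (h ▸ Finset.mem_insert_self w1 {q})
    have hv1w1 : v1 ≠ w1 := fun h => d1 (by rw [h]; exact hi1)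
    have hv1w2 : v1 ≠ w2 := fun h => d1 (by rw [h]; exact hi2')
    have hv2w1 : v2 ≠ w1 := fun h => d2 (by rw [h]; exact hi1)
    have hv2w2 : v2 ≠ w2 := fun h => d2 (by rw [h]; exact hi2')
    have m1 : w1 = x ∨ w1 = y ∨ w1 = z := by
      have := hw1.1; simpa using this
    have m2 : w2 = x ∨ w2 = y ∨ w2 = z := by
      have := hw2.1; simpa using this
    have mv1 : v1 = x ∨ v1 = y ∨ v1 = z := by simpa using hv1
    have mv2 : v2 = x ∨ v2 = y ∨ v2 = z := by simpa using hv2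
    omega
  obtain ⟨c, d, hcd, hDeq⟩ := Finset.card_eq_two.mp hDcard
  have hmc : ∀ r, r ∈ D → r = c ∨ r = d := by
    intro r hr; rw [hDeq] at hr; simpa using hr
  have hcD : c ∈ D := by rw [hDeq]; simp
  have hdD : d ∈ D := by rw [hDeq]; simp
  have hpxm := hmc px hpx
  have hpym := hmc py hpy
  have hpzm := hmc pz hpz
  have h2eq : px = py ∨ px = pz ∨ py = pz := by omega
  rcases h2eq with h | h | h
  · rcases hpxm with rfl | rfl
    · exact contra2 d hdD x (by simp) y (by simp) hxy (hdx d hdD (by omega)) (hdy d hdD (by omega))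
    · exact contra2 c hcD x (by simp) y (by simp) hxy (hdx c hcD (by omega)) (hdy c hcD (by omega))
  · rcases hpxm with rfl | rfl
    · exact contra2 d hdD x (by simp) z (by simp) hxz (hdx d hdD (by omega)) (hdz d hdD (by omega))
    · exact contra2 c hcD x (by simp) z (by simp) hxz (hdx c hcD (by omega)) (hdz c hcD (by omega))
  · rcases hpym with rfl | rfl
    · exact contra2 d hdD y (by simp) z (by simp) hyz (hdy d hdD (by omega)) (hdz d hdD (by omega))
    · exact contra2 c hcD y (by simp) z (by simp) hyz (hdy c hcD (by omega)) (hdz c hcD (by omega))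
end

section
/- Suppose B and B' are bases of a matroid and x ∈ B \ B'. Then there exists y ∈ B' \ B such that (B \ {x}) ∪ {y} is a basis. Moreover, if [d] is a basis of a matroid Δ on [n] with the bases ordered lexicographically, and B is the lexicographically smallest basis containing a given independent set I with I ∩ [d] = ∅, then B \ [d] = I. -/
/-- Basis exchange, and: the lexicographically smallest basis `B` containing an
independent set `I` disjoint from the first basis `[d]` satisfies `B \ [d] = I`. -/
theorem stmt_15 (n d : ℕ) (Indep : Finset ℕ → Prop)
    (hM : IsMatroidOn n Indep) (hB : IsBasisOf Indep (Finset.range d)) :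
    (∀ B B' x, IsBasisOf Indep B → IsBasisOf Indep B' → x ∈ B → x ∉ B' →
      ∃ y, y ∈ B' ∧ y ∉ B ∧ IsBasisOf Indep (insert y (B.erase x))) ∧
    (∀ I B, Indep I → Disjoint I (Finset.range d) → IsBasisOf Indep B → I ⊆ B →
      (∀ B', IsBasisOf Indep B' → I ⊆ B' → ¬ lexLt B' B) →
      B \ Finset.range d = I) := by
  obtain ⟨hemp, hsub, hdown, haug⟩ := hM
  have hcard : ∀ C B, Indep C → IsBasisOf Indep B → C.card ≤ B.card := by
    intro C B hC hBb
    by_contra h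
    push_neg at h
    obtain ⟨v, hv, hvi⟩ := haug B C hBb.1 hC h
    rw [Finset.mem_sdiff] at hv
    have := hBb.2 _ hvi (Finset.subset_insert _ _)
    exact hv.2 (this ▸ Finset.mem_insert_self v B)
  have hbasis : ∀ C B, Indep C → IsBasisOf Indep B → B.card ≤ C.card →
      IsBasisOf Indep C := by
    intro C B hC hBb hle
    refine ⟨hC, fun D hD hCD => (Finset.eq_of_subset_of_card_le hCD
      ((hcard D B hD hBb).trans hle)).symm⟩
  constructor
  · intro B B' x hBb hB'b hxB hxB'
    have hx : Indep (B.erase x) := hdown _ _ (Finset.erase_subset _ _) hBb.1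
    have hlt : (B.erase x).card < B'.card := by
      have h1 : B.card ≤ B'.card := hcard B B' hBb.1 hB'b
      have h2 : (B.erase x).card < B.card := Finset.card_erase_lt_of_mem hxB
      omega
    obtain ⟨y, hy, hyi⟩ := haug _ _ hx hB'b.1 hlt
    rw [Finset.mem_sdiff] at hy
    have hyB : y ∉ B := fun h =>
      hy.2 (Finset.mem_erase.mpr ⟨fun he => hxB' (he ▸ hy.1), h⟩)
    refine ⟨y, hy.1, hyB, hbasis _ B hyi hBb ?_⟩
    rw [Finset.card_insert_of_notMem hy.2, Finset.card_erase_of_mem hxB]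
    have : 1 ≤ B.card := Finset.card_pos.mpr ⟨x, hxB⟩
    omega
  · intro I B hI hdis hBb hIB hmin
    apply Finset.Subset.antisymm
    · intro v hv
      rw [Finset.mem_sdiff] at hv
      by_contra hvI
      have hind : Indep (B.erase v) := hdown _ _ (Finset.erase_subset _ _) hBb.1
      have hlt : (B.erase v).card < (Finset.range d).card := by
        have h1 : B.card ≤ (Finset.range d).card := hcard B _ hBb.1 hB
        have h2 : (B.erase v).card < B.card := Finset.card_erase_lt_of_mem hv.1
        omega
      obtain ⟨y, hy, hyi⟩ := haug _ _ hind hB.1 hlt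
      rw [Finset.mem_sdiff] at hy
      have hyd : y < d := Finset.mem_range.mp hy.1
      have hvd : d ≤ v := by
        by_contra h
        push_neg at h
        exact hv.2 (Finset.mem_range.mpr h)
      have hyB : y ∉ B := fun h =>
        hy.2 (Finset.mem_erase.mpr ⟨by omega, h⟩)
      have hB''b : IsBasisOf Indep (insert y (B.erase v)) := by
        refine hbasis _ B hyi hBb ?_
        rw [Finset.card_insert_of_notMem hy.2, Finset.card_erase_of_mem hv.1]
        have : 1 ≤ B.card := Finset.card_pos.mpr ⟨v, hv.1⟩
        omega
      have hIB'' : I ⊆ insert y (B.erase v) := by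
        intro i hi
        exact Finset.mem_insert_of_mem
          (Finset.mem_erase.mpr ⟨fun h => hvI (h ▸ hi), hIB hi⟩)
      refine hmin _ hB''b hIB'' ⟨y, Finset.mem_insert_self _ _, hyB, fun k hk => ?_⟩
      constructor
      · intro h
        rcases Finset.mem_insert.mp h with h | h
        · omega
        · exact Finset.mem_of_mem_erase h
      · intro h
        exact Finset.mem_insert_of_mem (Finset.mem_erase.mpr ⟨by omega, h⟩)
    · intro i hi
      rw [Finset.mem_sdiff]
      exact ⟨hIB hi, fun h => Finset.disjoint_left.mp hdis hi h⟩
end
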